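/- arXiv:0904.2340 — 5 statements merged into one kernel-verified Lean document; each statement's English description precedes it below -/
import Mathlib

section
/- For every term E of the labeled choiceless π-calculus 𝒫ᵉ (i.e., every well-formed ground labeled term), no label ⟨s,n⟩ ∈ {0,1}*×ℕ occurs more than once in E (Unicity). -/
/- A formalization of the (choiceless) π-calculus with observers,
   its labeled version (à la Cacciagrano–Corradini–Palamidessi),
   fairness notions and testing semantics. -/

namespace PiFair

/-- Names are natural numbers. -/
abbrev Name := ℕ

/-- Action labels ⟨s,n⟩ ∈ {0,1}* × ℕ. -/
abbrev Label := List Bool × ℕ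

/-- Unlabeled processes / observers.  Processes (𝒫) are the ω-free terms;
    observers (𝒪) may also use the success prefix ω. -/
inductive Proc : Type
  | nil : Proc
  | input : Name → Name → Proc → Proc        -- x(y).P
  | output : Name → Name → Proc → Proc       -- x̄y.P
  | omegaPre : Proc → Proc                   -- ω.P  (observers only)
  | par : Proc → Proc → Proc
  | res : Name → Proc → Proc                 -- (νx)P
  | rep : Proc → Proc                        -- !P
  deriving DecidableEq

/-- Membership in 𝒫: no occurrence of the success prefix ω. -/
def Proc.noOmega : Proc → Prop
  | .nil => True
  | .input _ _ P => P.noOmega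
  | .output _ _ P => P.noOmega
  | .omegaPre _ => False
  | .par P Q => P.noOmega ∧ Q.noOmega
  | .res _ P => P.noOmega
  | .rep P => P.noOmega

/-- Free names of a process. -/
def Proc.fn : Proc → Set Name
  | .nil => ∅
  | .input x y P => {x} ∪ (P.fn \ {y})
  | .output x y P => {x} ∪ {y} ∪ P.fn
  | .omegaPre P => P.fn
  | .par P Q => P.fn ∪ Q.fn
  | .res x P => P.fn \ {x}
  | .rep P => P.fn

/-- (Naive) substitution P{z/y}: replace free occurrences of y by z. -/
def Proc.subst : Proc → Name → Name → Proc
  | .nil, _, _ => .nil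
  | .input x w P, y, z =>
      .input (if x = y then z else x) w (if w = y then P else P.subst y z)
  | .output x w P, y, z =>
      .output (if x = y then z else x) (if w = y then z else w) (P.subst y z)
  | .omegaPre P, y, z => .omegaPre (P.subst y z)
  | .par P Q, y, z => .par (P.subst y z) (Q.subst y z)
  | .res x P, y, z => .res x (if x = y then P else P.subst y z)
  | .rep P, y, z => .rep (P.subst y z)

/-- Transition labels μ: early input xy, output x̄y, bound output x̄(y), τ, and ω. -/
inductive Act : Type
  | inp : Name → Name → Act
  | out : Name → Name → Act
  | bout : Name → Name → Act
  | tau : Act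
  | omega : Act
  deriving DecidableEq

/-- Bound names of an action. -/
def Act.bn : Act → Set Name
  | .bout _ y => {y}
  | _ => ∅

/-- Free names of an action. -/
def Act.fnA : Act → Set Name
  | .inp x y => {x, y}
  | .out x y => {x, y}
  | .bout x _ => {x}
  | _ => ∅

/-- All names of an action. -/
def Act.n (μ : Act) : Set Name := μ.fnA ∪ μ.bn

/-- Early operational semantics for unlabeled terms
    (rules Input, Output, Open, Res, Par, Com, Close, Rep, plus ω). -/
inductive Step : Proc → Act → Proc → Prop
  | input : ∀ x y z P, Step (.input x y P) (.inp x z) (P.subst y z)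
  | output : ∀ x y P, Step (.output x y P) (.out x y) P
  | open_ : ∀ x y P P', Step P (.out x y) P' → x ≠ y →
      Step (.res y P) (.bout x y) P'
  | res : ∀ y μ P P', Step P μ P' → y ∉ μ.n →
      Step (.res y P) μ (.res y P')
  | parL : ∀ μ P P' Q, Step P μ P' → (∀ y ∈ μ.bn, y ∉ Q.fn) →
      Step (.par P Q) μ (.par P' Q)
  | parR : ∀ μ P Q Q', Step Q μ Q' → (∀ y ∈ μ.bn, y ∉ P.fn) →
      Step (.par P Q) μ (.par P Q')
  | comL : ∀ x y P P' Q Q', Step P (.inp x y) P' → Step Q (.out x y) Q' →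
      Step (.par P Q) .tau (.par P' Q')
  | comR : ∀ x y P P' Q Q', Step P (.out x y) P' → Step Q (.inp x y) Q' →
      Step (.par P Q) .tau (.par P' Q')
  | closeL : ∀ x y P P' Q Q', Step P (.inp x y) P' → Step Q (.bout x y) Q' →
      y ∉ P.fn → Step (.par P Q) .tau (.res y (.par P' Q'))
  | closeR : ∀ x y P P' Q Q', Step P (.bout x y) P' → Step Q (.inp x y) Q' →
      y ∉ Q.fn → Step (.par P Q) .tau (.res y (.par P Q'))
  | rep : ∀ μ P P', Step P μ P' → Step (.rep P) μ (.par P' (.rep P))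
  | omega_ : ∀ P, Step (.omegaPre P) .omega P

/-- Ground labeled terms 𝒫ᵉ_gr: prefixes and replications carry a label;
    the body of a replication and of an ω prefix is an unlabeled term. -/
inductive LProc : Type
  | nil : LProc
  | input : Name → Name → Label → LProc → LProc   -- x(y)_{⟨s,n⟩}.E
  | output : Name → Name → Label → LProc → LProc  -- x̄y_{⟨s,n⟩}.E
  | omegaPre : Proc → LProc                       -- ω.o (no label, per the paper)
  | par : LProc → LProc → LProc
  | res : Name → LProc → LProc
  | rep : Label → Proc → LProc                    -- !_{⟨s,n⟩}P
  deriving DecidableEq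

/-- Labeled terms with no ω (labeled processes, as opposed to observers). -/
def LProc.noOmega : LProc → Prop
  | .nil => True
  | .input _ _ _ E => E.noOmega
  | .output _ _ _ E => E.noOmega
  | .omegaPre _ => False
  | .par E F => E.noOmega ∧ F.noOmega
  | .res _ E => E.noOmega
  | .rep _ P => P.noOmega

/-- The labeling function L_{⟨s,n⟩}(·). -/
def labelWith : Label → Proc → LProc
  | _, .nil => .nil
  | l, .input x y P => .input x y l (labelWith (l.1, l.2 + 1) P)
  | l, .output x y P => .output x y l (labelWith (l.1, l.2 + 1) P)
  | _, .omegaPre P => .omegaPre P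
  | l, .par P Q => .par (labelWith (l.1 ++ [false], l.2) P)
                       (labelWith (l.1 ++ [true], l.2) Q)
  | l, .res x P => .res x (labelWith l P)
  | l, .rep P => .rep l P

/-- The top-level labels top(E). -/
def LProc.top : LProc → Set Label
  | .nil => ∅
  | .input _ _ l _ => {l}
  | .output _ _ l _ => {l}
  | .omegaPre _ => ∅
  | .par E F => E.top ∪ F.top
  | .res _ E => E.top
  | .rep l _ => {l}

/-- All labels lab(E). -/
def LProc.lab : LProc → Set Label
  | .nil => ∅
  | .input _ _ l E => {l} ∪ E.lab
  | .output _ _ l E => {l} ∪ E.lab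
  | .omegaPre _ => ∅
  | .par E F => E.lab ∪ F.lab
  | .res _ E => E.lab
  | .rep l _ => {l}

/-- Number of occurrences of a label in a labeled term. -/
def LProc.labCount : LProc → Label → ℕ
  | .nil, _ => 0
  | .input _ _ l' E, l => (if l' = l then 1 else 0) + E.labCount l
  | .output _ _ l' E, l => (if l' = l then 1 else 0) + E.labCount l
  | .omegaPre _, _ => 0
  | .par E F, l => E.labCount l + F.labCount l
  | .res _ E, l => E.labCount l
  | .rep l' _, l => if l' = l then 1 else 0

/-- The relation ℜ on label sets: string components pairwise prefix-incomparable. -/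
def LabRel (L₀ L₁ : Set Label) : Prop :=
  ∀ l₀ ∈ L₀, ∀ l₁ ∈ L₁, ¬ l₀.1 <+: l₁.1 ∧ ¬ l₁.1 <+: l₀.1

/-- Well-formedness of ground labeled terms. -/
inductive Wf : LProc → Prop
  | nil : Wf .nil
  | prefIn : ∀ (l : Label) (x y : Name) (P : Proc),
      Wf (labelWith l (.input x y P))
  | prefOut : ∀ (l : Label) (x y : Name) (P : Proc),
      Wf (labelWith l (.output x y P))
  | par : ∀ E₀ E₁, Wf E₀ → Wf E₁ → LabRel E₀.top E₁.top → Wf (.par E₀ E₁)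
  | res : ∀ x E, Wf E → Wf (.res x E)
  | rep : ∀ (l : Label) (P : Proc), Wf (.rep l P)
  | omegaPre : ∀ (o : Proc), Wf (.omegaPre o)

/-- Free names of a labeled term. -/
def LProc.fn : LProc → Set Name
  | .nil => ∅
  | .input x y _ E => {x} ∪ (E.fn \ {y})
  | .output x y _ E => {x} ∪ {y} ∪ E.fn
  | .omegaPre o => o.fn
  | .par E F => E.fn ∪ F.fn
  | .res x E => E.fn \ {x}
  | .rep _ P => P.fn

/-- Substitution on labeled terms. -/
def LProc.subst : LProc → Name → Name → LProc
  | .nil, _, _ => .nil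
  | .input x w l E, y, z =>
      .input (if x = y then z else x) w l (if w = y then E else E.subst y z)
  | .output x w l E, y, z =>
      .output (if x = y then z else x) (if w = y then z else w) l (E.subst y z)
  | .omegaPre o, y, z => .omegaPre (o.subst y z)
  | .par E F, y, z => .par (E.subst y z) (F.subst y z)
  | .res x E, y, z => .res x (if x = y then E else E.subst y z)
  | .rep l P, y, z => .rep l (P.subst y z)

/-- Label erasure Unl(·). -/
def LProc.unl : LProc → Proc
  | .nil => .nil
  | .input x y _ E => .input x y E.unl
  | .output x y _ E => .output x y E.unl
  | .omegaPre o => .omegaPre o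
  | .par E F => .par E.unl F.unl
  | .res x E => .res x E.unl
  | .rep _ P => .rep P

/-- Operational semantics of labeled terms: as for unlabeled ones, ignoring
    labels, except replication, which relabels the unfolded copy. -/
inductive LStep : LProc → Act → LProc → Prop
  | input : ∀ x y z l E, LStep (.input x y l E) (.inp x z) (E.subst y z)
  | output : ∀ x y l E, LStep (.output x y l E) (.out x y) E
  | open_ : ∀ x y E E', LStep E (.out x y) E' → x ≠ y →
      LStep (.res y E) (.bout x y) E'
  | res : ∀ y μ E E', LStep E μ E' → y ∉ μ.n →
      LStep (.res y E) μ (.res y E')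
  | parL : ∀ μ E E' F, LStep E μ E' → (∀ y ∈ μ.bn, y ∉ F.fn) →
      LStep (.par E F) μ (.par E' F)
  | parR : ∀ μ E F F', LStep F μ F' → (∀ y ∈ μ.bn, y ∉ E.fn) →
      LStep (.par E F) μ (.par E F')
  | comL : ∀ x y E E' F F', LStep E (.inp x y) E' → LStep F (.out x y) F' →
      LStep (.par E F) .tau (.par E' F')
  | comR : ∀ x y E E' F F', LStep E (.out x y) E' → LStep F (.inp x y) F' →
      LStep (.par E F) .tau (.par E' F')
  | closeL : ∀ x y E E' F F', LStep E (.inp x y) E' → LStep F (.bout x y) F' →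
      y ∉ E.fn → LStep (.par E F) .tau (.res y (.par E' F'))
  | closeR : ∀ x y E E' F F', LStep E (.bout x y) E' → LStep F (.inp x y) F' →
      y ∉ F.fn → LStep (.par E F) .tau (.res y (.par E F'))
  | rep : ∀ μ (l : Label) (P P' : Proc), Step P μ P' →
      LStep (.rep l P) μ
        (.par (labelWith (l.1 ++ [false], l.2 + 1) P') (.rep (l.1 ++ [true], l.2 + 1) P))
  | omega_ : ∀ o, LStep (.omegaPre o) .omega (labelWith ([], 0) o)

/-- The live predicate live(⟨s,n⟩, μ, S) of Table "Live labels". -/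
inductive Live : Label → Act → LProc → Prop
  | input : ∀ (l : Label) x y z E, Live l (.inp x z) (.input x y l E)
  | output : ∀ (l : Label) x z E, Live l (.out x z) (.output x z l E)
  | res : ∀ l μ y E, Live l μ E → y ∉ μ.n → Live l μ (.res y E)
  | open_ : ∀ l x y E, Live l (.out x y) E → x ≠ y → Live l (.bout x y) (.res y E)
  | rep : ∀ (l : Label) μ (P P' : Proc), Step P μ P' → Live l μ (.rep l P)
  | parL : ∀ l μ E F, Live l μ E → (∀ y ∈ μ.bn, y ∉ F.fn) → Live l μ (.par E F)
  | parR : ∀ l μ E F, Live l μ F → (∀ y ∈ μ.bn, y ∉ E.fn) → Live l μ (.par E F)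
  | comL₁ : ∀ l l' x y E F, Live l (.inp x y) E → Live l' (.out x y) F →
      Live l .tau (.par E F)
  | comL₂ : ∀ l l' x y E F, Live l (.inp x y) E → Live l' (.out x y) F →
      Live l' .tau (.par E F)
  | comR₁ : ∀ l l' x y E F, Live l (.out x y) E → Live l' (.inp x y) F →
      Live l .tau (.par E F)
  | comR₂ : ∀ l l' x y E F, Live l (.out x y) E → Live l' (.inp x y) F →
      Live l' .tau (.par E F)
  | closeL₁ : ∀ l l' x y E F, Live l (.inp x y) E → Live l' (.bout x y) F →
      y ∉ E.fn → Live l .tau (.par E F)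
  | closeL₂ : ∀ l l' x y E F, Live l (.inp x y) E → Live l' (.bout x y) F →
      y ∉ E.fn → Live l' .tau (.par E F)
  | closeR₁ : ∀ l l' x y E F, Live l (.bout x y) E → Live l' (.inp x y) F →
      y ∉ F.fn → Live l .tau (.par E F)
  | closeR₂ : ∀ l l' x y E F, Live l (.bout x y) E → Live l' (.inp x y) F →
      y ∉ F.fn → Live l' .tau (.par E F)

/-- Live labels Ll(S): labels live for τ. -/
def Ll (S : LProc) : Set Label := {v | Live v .tau S}

/-- A maximal computation w.r.t. a step relation, represented as an infinite
    sequence which stutters on a final stuck state when finite. -/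
structure MaxComp {α : Type} (step : α → α → Prop) (s : α) where
  seq : ℕ → α
  init : seq 0 = s
  succ : ∀ i, step (seq i) (seq (i + 1)) ∨
    ((∀ t, ¬ step (seq i) t) ∧ seq (i + 1) = seq i)

/-- τ-step relation on unlabeled terms. -/
def TauStep (P Q : Proc) : Prop := Step P .tau Q

/-- τ-step relation on labeled terms. -/
def LTauStep (E F : LProc) : Prop := LStep E .tau F

/-- A maximal τ-computation (labeled) is weak-fair: no label is
    continuously live from some point on. -/
def WeakFair {S : LProc} (c : MaxComp LTauStep S) : Prop :=
  ∀ v : Label, ∀ i : ℕ, ∃ j ≥ i, v ∉ Ll (c.seq j)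

/-- A maximal τ-computation (labeled) is strong-fair: every label is
    eventually never live. -/
def StrongFair {S : LProc} (c : MaxComp LTauStep S) : Prop :=
  ∀ v : Label, ∃ i : ℕ, ∀ j ≥ i, v ∉ Ll (c.seq j)

/-- A labeled computation is successful: some state enables ω. -/
def LSuccess {S : LProc} (c : MaxComp LTauStep S) : Prop :=
  ∃ i, ∃ T, LStep (c.seq i) .omega T

/-- An unlabeled computation is successful: some state enables ω. -/
def PSuccess {T : Proc} (c : MaxComp TauStep T) : Prop :=
  ∃ i, ∃ T', Step (c.seq i) .omega T'

/-- P must o. -/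
def Must (P o : Proc) : Prop :=
  ∀ c : MaxComp TauStep (.par P o), PSuccess c

/-- Weak τ-reachability. -/
def TauStar : Proc → Proc → Prop := Relation.ReflTransGen TauStep

/-- P fair o: along every maximal computation, every state can reach,
    in finitely many τ-steps, a state with ω enabled. -/
def FairT (P o : Proc) : Prop :=
  ∀ c : MaxComp TauStep (.par P o), ∀ i : ℕ,
    ∃ T T', TauStar (c.seq i) T ∧ Step T .omega T'

/-- E sfmust ρ: every strong-fair computation from E|ρ is successful. -/
def SfMust (E ρ : LProc) : Prop :=
  ∀ c : MaxComp LTauStep (.par E ρ), StrongFair c → LSuccess c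

/-- E wfmust ρ: every weak-fair computation from E|ρ is successful. -/
def WfMust (E ρ : LProc) : Prop :=
  ∀ c : MaxComp LTauStep (.par E ρ), WeakFair c → LSuccess c

/-- Strong bisimulations on unlabeled terms. -/
def IsBisim (R : Proc → Proc → Prop) : Prop :=
  ∀ P Q, R P Q →
    (∀ μ P', Step P μ P' → ∃ Q', Step Q μ Q' ∧ R P' Q') ∧
    (∀ μ Q', Step Q μ Q' → ∃ P', Step P μ P' ∧ R P' Q')

/-- Strong bisimilarity. -/
def Bisimilar (P Q : Proc) : Prop := ∃ R, IsBisim R ∧ R P Q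

lemma labCount_labelWith_pos (P : Proc) :
    ∀ (s : List Bool) (n : ℕ) (l' : Label),
      (labelWith (s, n) P).labCount l' ≠ 0 →
      s <+: l'.1 ∧ (l'.1 = s → n ≤ l'.2) := by
  induction P with
  | nil => intro s n l' h; simp [labelWith, LProc.labCount] at h
  | input x y P ih =>
      intro s n l' h
      simp only [labelWith, LProc.labCount] at h
      by_cases hl : (s, n) = l'
      · subst hl; exact ⟨List.prefix_refl _, fun _ => le_refl _⟩
      · simp [hl] at h
        obtain ⟨h1, h2⟩ := ih s (n + 1) l' h
        exact ⟨h1, fun he => le_trans (Nat.le_succ n) (h2 he)⟩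
  | output x y P ih =>
      intro s n l' h
      simp only [labelWith, LProc.labCount] at h
      by_cases hl : (s, n) = l'
      · subst hl; exact ⟨List.prefix_refl _, fun _ => le_refl _⟩
      · simp [hl] at h
        obtain ⟨h1, h2⟩ := ih s (n + 1) l' h
        exact ⟨h1, fun he => le_trans (Nat.le_succ n) (h2 he)⟩
  | omegaPre P ih => intro s n l' h; simp [labelWith, LProc.labCount] at h
  | par P Q ihP ihQ =>
      intro s n l' h
      simp only [labelWith, LProc.labCount] at h
      have key : ∀ b : Bool, s ++ [b] <+: l'.1 →
          s <+: l'.1 ∧ (l'.1 = s → n ≤ l'.2) := by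
        intro b hb
        constructor
        · exact (List.prefix_append s [b]).trans hb
        · intro he
          exfalso
          have := hb.length_le
          rw [he] at this
          simp at this
      rcases Nat.eq_zero_or_pos ((labelWith (s ++ [false], n) P).labCount l') with h0 | h0
      · rw [h0] at h; simp at h
        exact key true (ihQ (s ++ [true]) n l' h).1
      · exact key false (ihP (s ++ [false]) n l' (Nat.pos_iff_ne_zero.mp h0)).1
  | res x P ih =>
      intro s n l' h
      simp only [labelWith, LProc.labCount] at h
      exact ih s n l' h
  | rep P ih =>
      intro s n l' h
      simp only [labelWith, LProc.labCount] at h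
      by_cases hl : (s, n) = l'
      · subst hl; exact ⟨List.prefix_refl _, fun _ => le_refl _⟩
      · simp [hl] at h

lemma labCount_labelWith_le_one (P : Proc) :
    ∀ (s : List Bool) (n : ℕ) (l' : Label),
      (labelWith (s, n) P).labCount l' ≤ 1 := by
  induction P with
  | nil => intro s n l'; simp [labelWith, LProc.labCount]
  | input x y P ih =>
      intro s n l'
      simp only [labelWith, LProc.labCount]
      by_cases hl : (s, n) = l'
      · subst hl
        have : (labelWith (s, n + 1) P).labCount (s, n) = 0 := by
          by_contra h
          have := (labCount_labelWith_pos P s (n + 1) (s, n) h).2 rfl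
          omega
        simp [this]
      · simpa [hl] using ih s (n + 1) l'
  | output x y P ih =>
      intro s n l'
      simp only [labelWith, LProc.labCount]
      by_cases hl : (s, n) = l'
      · subst hl
        have : (labelWith (s, n + 1) P).labCount (s, n) = 0 := by
          by_contra h
          have := (labCount_labelWith_pos P s (n + 1) (s, n) h).2 rfl
          omega
        simp [this]
      · simpa [hl] using ih s (n + 1) l'
  | omegaPre P ih => intro s n l'; simp [labelWith, LProc.labCount]
  | par P Q ihP ihQ =>
      intro s n l'
      simp only [labelWith, LProc.labCount]
      rcases Nat.eq_zero_or_pos ((labelWith (s ++ [false], n) P).labCount l') with h0 | h0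
      · rw [h0]; simpa using ihQ (s ++ [true]) n l'
      · rcases Nat.eq_zero_or_pos ((labelWith (s ++ [true], n) Q).labCount l') with h1 | h1
        · rw [h1]; simpa using ihP (s ++ [false]) n l'
        · exfalso
          have p0 := (labCount_labelWith_pos P (s ++ [false]) n l'
            (Nat.pos_iff_ne_zero.mp h0)).1
          have p1 := (labCount_labelWith_pos Q (s ++ [true]) n l'
            (Nat.pos_iff_ne_zero.mp h1)).1
          have hc := List.prefix_or_prefix_of_prefix p0 p1
          rcases hc with hc | hc <;>
          · have := hc.eq_of_length (by simp)
            simp at this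
  | res x P ih =>
      intro s n l'
      simpa [labelWith, LProc.labCount] using ih s n l'
  | rep P ih =>
      intro s n l'
      simp only [labelWith, LProc.labCount]
      split <;> simp

lemma top_prefix_of_labCount_pos (E : LProc) (hE : Wf E) (l : Label)
    (h : E.labCount l ≠ 0) : ∃ l₀ ∈ E.top, l₀.1 <+: l.1 := by
  induction hE with
  | nil => simp [LProc.labCount] at h
  | prefIn l' x y P =>
      refine ⟨l', by simp [labelWith, LProc.top], ?_⟩
      exact (labCount_labelWith_pos (.input x y P) l'.1 l'.2 l (by simpa using h)).1
  | prefOut l' x y P =>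
      refine ⟨l', by simp [labelWith, LProc.top], ?_⟩
      exact (labCount_labelWith_pos (.output x y P) l'.1 l'.2 l (by simpa using h)).1
  | par E₀ E₁ hw₀ hw₁ hrel ih₀ ih₁ =>
      simp only [LProc.labCount] at h
      rcases Nat.eq_zero_or_pos (E₀.labCount l) with h0 | h0
      · rw [h0] at h; simp at h
        obtain ⟨l₀, hl₀, hp⟩ := ih₁ h
        exact ⟨l₀, Or.inr hl₀, hp⟩
      · obtain ⟨l₀, hl₀, hp⟩ := ih₀ (Nat.pos_iff_ne_zero.mp h0)
        exact ⟨l₀, Or.inl hl₀, hp⟩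
  | res x E hw ih =>
      simp only [LProc.labCount] at h
      exact ih h
  | rep l' P =>
      simp only [LProc.labCount] at h
      refine ⟨l', by simp [LProc.top], ?_⟩
      by_cases hl : l' = l
      · subst hl; exact List.prefix_refl _
      · simp [hl] at h
  | omegaPre o => simp [LProc.labCount] at h

end PiFair
open PiFair in
/-- Unicity: no label occurs more than once in a well-formed labeled term. -/
theorem unicity (E : LProc) (hE : Wf E) (l : Label) :
    E.labCount l ≤ 1 := by
  induction hE with
  | nil => simp [LProc.labCount]
  | prefIn l' x y P =>
      simpa using labCount_labelWith_le_one (.input x y P) l'.1 l'.2 l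
  | prefOut l' x y P =>
      simpa using labCount_labelWith_le_one (.output x y P) l'.1 l'.2 l
  | par E₀ E₁ hw₀ hw₁ hrel ih₀ ih₁ =>
      show E₀.labCount l + E₁.labCount l ≤ 1
      rcases Nat.eq_zero_or_pos (E₀.labCount l) with h0 | h0
      · simpa [h0] using ih₁
      · rcases Nat.eq_zero_or_pos (E₁.labCount l) with h1 | h1
        · simpa [h1] using ih₀
        · exfalso
          obtain ⟨l₀, hl₀, hp₀⟩ := top_prefix_of_labCount_pos E₀ hw₀ l
            (Nat.pos_iff_ne_zero.mp h0)
          obtain ⟨l₁, hl₁, hp₁⟩ := top_prefix_of_labCount_pos E₁ hw₁ l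
            (Nat.pos_iff_ne_zero.mp h1)
          obtain ⟨hn₁, hn₂⟩ := hrel l₀ hl₀ l₁ hl₁
          rcases List.prefix_or_prefix_of_prefix hp₀ hp₁ with hc | hc
          · exact hn₁ hc
          · exact hn₂ hc
  | res x E hw ih => exact ih
  | rep l' P =>
      show (if l' = l then 1 else 0) ≤ 1
      split <;> simp
  | omegaPre o => simp [LProc.labCount]
end

section
/- There exist a labeled experiment S and a weak-fair computation from S that is not a strong-fair computation. In particular this holds for S = E|ρ with E = !_{v⁰₁}a | (νb)(b̄_{v⁰₂} | !_{v⁰₃}b.(ā | b̄)) and ρ = a_{v₄}.ω. -/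
/- A formalization of the (choiceless) π-calculus with observers,
   its labeled version (à la Cacciagrano–Corradini–Palamidessi),
   fairness notions and testing semantics. -/

namespace PiFair

/-! ### Witness construction for weak-fair ≠ strong-fair -/

namespace Witness

/-- a(y).0 -/
def Pa : Proc := .input 0 3 .nil
/-- b(y).(ā | b̄) -/
def Pb : Proc := .input 1 3 (.par (.output 0 3 .nil) (.output 1 3 .nil))

def rAs (k : ℕ) : List Bool := [false, false] ++ List.replicate k true
def rBs (k : ℕ) : List Bool := [true, true] ++ List.replicate k true
def rA (k : ℕ) : Label := (rAs k, k)
def rB (k : ℕ) : Label := (rBs k, k)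
def al (k : ℕ) : Label := (rBs k ++ [false, false], k + 1)
def bl (k : ℕ) : Label := (rBs k ++ [false, true], k + 1)

def v2 : Label := ([true, false], 0)
def v4 : Label := ([false, true], 0)

def blab : ℕ → Label
  | 0 => v2
  | k + 1 => bl k

def aout (l : Label) : LProc := .output 0 3 l .nil
def bout (l : Label) : LProc := .output 1 3 l .nil

def wrapNil : ℕ → LProc → LProc
  | 0, t => t
  | k + 1, t => .par .nil (wrapNil k t)

def grav : ℕ → LProc → LProc
  | 0, t => t
  | k + 1, t => .par (.par .nil .nil) (grav k t)

def GA (k : ℕ) : LProc := wrapNil k (.rep (rA k) Pa)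
def Mid (k : ℕ) : LProc :=
  .par (.par (aout (al k)) (bout (bl k))) (.rep (rB (k+1)) Pb)
def Tail (k : ℕ) : LProc :=
  .par (.par .nil (bout (bl k))) (.rep (rB (k+1)) Pb)

def Bpre : ℕ → LProc
  | 0 => .par (bout v2) (.rep (rB 0) Pb)
  | k + 1 => .par .nil (grav k (Tail k))

def Bmid (k : ℕ) : LProc := .par .nil (grav k (Mid k))

def rho : LProc := .input 0 3 v4 (.omegaPre .nil)

def Spre (k : ℕ) : LProc := .par (.par (GA k) (.res 1 (Bpre k))) rho
def Smid (k : ℕ) : LProc := .par (.par (GA k) (.res 1 (Bmid k))) rho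

lemma rep_succ (k : ℕ) :
    List.replicate k true ++ [true] = List.replicate (k+1) true := by
  induction k with
  | zero => rfl
  | succ k ih => simpa [List.replicate_succ] using ih

lemma rBs_succ (k : ℕ) : rBs k ++ [true] = rBs (k+1) := by
  simp only [rBs, List.append_assoc, rep_succ]

lemma rAs_succ (k : ℕ) : rAs k ++ [true] = rAs (k+1) := by
  simp only [rAs, List.append_assoc, rep_succ]

/-! #### Step facts -/

lemma step_Pb_inp :
    Step Pb (.inp 1 3) (.par (.output 0 3 .nil) (.output 1 3 .nil)) := by
  have h := Step.input 1 3 3 (Proc.par (.output 0 3 .nil) (.output 1 3 .nil))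
  have e : (Proc.par (.output 0 3 .nil) (.output 1 3 .nil)).subst 3 3
      = Proc.par (.output 0 3 .nil) (.output 1 3 .nil) := by decide
  rw [e] at h
  exact h

lemma step_Pa_inp : Step Pa (.inp 0 3) .nil := by
  have h := Step.input 0 3 3 Proc.nil
  exact h

lemma lstep_rep_Pb (k : ℕ) : LStep (.rep (rB k) Pb) (.inp 1 3) (Mid k) := by
  have h := LStep.rep (.inp 1 3) (rB k) Pb _ step_Pb_inp
  have e : LProc.par
      (labelWith ((rB k).1 ++ [false], (rB k).2 + 1)
        (.par (.output 0 3 .nil) (.output 1 3 .nil)))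
      (.rep ((rB k).1 ++ [true], (rB k).2 + 1) Pb) = Mid k := by
    simp [Mid, aout, bout, al, bl, rB, labelWith, List.append_assoc, rBs_succ]
  rwa [e] at h

lemma lstep_rep_Pa (k : ℕ) :
    LStep (.rep (rA k) Pa) (.inp 0 3) (.par .nil (.rep (rA (k+1)) Pa)) := by
  have h := LStep.rep (.inp 0 3) (rA k) Pa _ step_Pa_inp
  have e : LProc.par (labelWith ((rA k).1 ++ [false], (rA k).2 + 1) Proc.nil)
      (.rep ((rA k).1 ++ [true], (rA k).2 + 1) Pa)
      = LProc.par .nil (.rep (rA (k+1)) Pa) := by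
    simp [rA, labelWith, rAs_succ]
  rwa [e] at h

lemma lstep_grav {t t' : LProc} {μ : Act} (k : ℕ) (h : LStep t μ t') :
    LStep (grav k t) μ (grav k t') := by
  induction k with
  | zero => exact h
  | succ k ih =>
      exact LStep.parR _ _ _ _ ih (by intro y hy; simp [LProc.fn])

lemma lstep_wrap {t t' : LProc} {μ : Act} (k : ℕ) (h : LStep t μ t') :
    LStep (wrapNil k t) μ (wrapNil k t') := by
  induction k with
  | zero => exact h
  | succ k ih =>
      exact LStep.parR _ _ _ _ ih (by intro y hy; simp [LProc.fn])

lemma grav_comm (k : ℕ) (t : LProc) :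
    grav k (.par (.par .nil .nil) t) = .par (.par .nil .nil) (grav k t) := by
  induction k with
  | zero => rfl
  | succ k ih => simp [grav, ih]

lemma wrap_comm (k : ℕ) (t : LProc) :
    wrapNil k (.par .nil t) = .par .nil (wrapNil k t) := by
  induction k with
  | zero => rfl
  | succ k ih => simp [wrapNil, ih]

lemma bn_tau : ∀ y ∈ Act.bn .tau, y ∉ (∅ : Set Name) := by
  intro y hy; simp [Act.bn] at hy

lemma lstep_Bpre (k : ℕ) : LStep (Bpre k) .tau (Bmid k) := by
  cases k with
  | zero =>
      have h1 : LStep (bout v2) (.out 1 3) .nil := LStep.output 1 3 v2 .nil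
      have h := LStep.comR 1 3 (bout v2) .nil (.rep (rB 0) Pb) (Mid 0) h1
        (lstep_rep_Pb 0)
      exact h
  | succ k =>
      have h1 : LStep (.par .nil (bout (bl k))) (.out 1 3) (.par .nil .nil) :=
        LStep.parR _ _ _ _ (LStep.output 1 3 (bl k) .nil)
          (by intro y hy; simp [Act.bn] at hy)
      have h2 : LStep (Tail k) .tau (.par (.par .nil .nil) (Mid (k+1))) :=
        LStep.comR 1 3 _ _ _ _ h1 (lstep_rep_Pb (k+1))
      have h3 := lstep_grav k h2
      rw [grav_comm] at h3
      have h4 : LStep (Bpre (k+1)) .tau (.par .nil (.par (.par .nil .nil) (grav k (Mid (k+1))))) :=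
        LStep.parR _ _ _ _ h3 (by intro y hy; simp [Act.bn] at hy)
      exact h4

lemma lstep_Bmid_out (k : ℕ) : LStep (Bmid k) (.out 0 3) (Bpre (k+1)) := by
  have h0 : LStep (Mid k) (.out 0 3) (Tail k) :=
    LStep.parL _ _ _ _
      (LStep.parL _ _ _ _ (LStep.output 0 3 (al k) .nil)
        (by intro y hy; simp [Act.bn] at hy))
      (by intro y hy; simp [Act.bn] at hy)
  exact LStep.parR _ _ _ _ (lstep_grav k h0) (by intro y hy; simp [Act.bn] at hy)

lemma lstep_GA (k : ℕ) : LStep (GA k) (.inp 0 3) (GA (k+1)) := by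
  have h := lstep_wrap k (lstep_rep_Pa k)
  rw [wrap_comm] at h
  exact h

lemma lstep_pre_mid (k : ℕ) : LTauStep (Spre k) (Smid k) := by
  refine LStep.parL _ _ _ _ ?_ (by intro y hy; simp [Act.bn] at hy)
  refine LStep.parR _ _ _ _ ?_ (by intro y hy; simp [Act.bn] at hy)
  exact LStep.res 1 _ _ _ (lstep_Bpre k) (by simp [Act.n, Act.fnA, Act.bn])

lemma lstep_mid_pre (k : ℕ) : LTauStep (Smid k) (Spre (k+1)) := by
  refine LStep.parL _ _ _ _ ?_ (by intro y hy; simp [Act.bn] at hy)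
  exact LStep.comL 0 3 _ _ _ _ (lstep_GA k)
    (LStep.res 1 _ _ _ (lstep_Bmid_out k) (by simp [Act.n, Act.fnA, Act.bn]))

/-! #### Live-label inversion -/

lemma live_nil {v : Label} {μ : Act} (h : Live v μ .nil) : False := by cases h

lemma live_par_nil {v : Label} {μ : Act} {F : LProc}
    (h : Live v μ (.par .nil F)) : Live v μ F := by
  cases h <;> first
    | assumption
    | exact (live_nil (by assumption)).elim

lemma live_parnn {v : Label} {μ : Act} (h : Live v μ (.par .nil .nil)) : False := by
  cases h <;> exact (live_nil (by assumption)).elim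

lemma live_par_pnn {v : Label} {μ : Act} {F : LProc}
    (h : Live v μ (.par (.par .nil .nil) F)) : Live v μ F := by
  cases h <;> first
    | assumption
    | exact (live_parnn (by assumption)).elim

lemma live_grav {v : Label} {μ : Act} {t : LProc} (k : ℕ)
    (h : Live v μ (grav k t)) : Live v μ t := by
  induction k with
  | zero => exact h
  | succ k ih => exact ih (live_par_pnn h)

lemma live_wrap {v : Label} {μ : Act} {t : LProc} (k : ℕ)
    (h : Live v μ (wrapNil k t)) : Live v μ t := by
  induction k with
  | zero => exact h
  | succ k ih => exact ih (live_par_nil h)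

lemma live_grav_intro {v : Label} {μ : Act} {t : LProc} (k : ℕ)
    (h : Live v μ t) : Live v μ (grav k t) := by
  induction k with
  | zero => exact h
  | succ k ih => exact Live.parR _ _ _ _ ih (by intro y hy; simp [LProc.fn])

lemma live_output_inv {v : Label} {μ : Act} {x z : Name} {l : Label} {E : LProc}
    (h : Live v μ (.output x z l E)) : v = l ∧ μ = .out x z := by
  cases h; exact ⟨rfl, rfl⟩

lemma live_input_inv {v : Label} {μ : Act} {x y : Name} {l : Label} {E : LProc}
    (h : Live v μ (.input x y l E)) : v = l ∧ ∃ z, μ = .inp x z := by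
  cases h; exact ⟨rfl, _, rfl⟩

lemma live_rep_inv {v : Label} {μ : Act} {l : Label} {P : Proc}
    (h : Live v μ (.rep l P)) : v = l ∧ ∃ P', Step P μ P' := by
  cases h with
  | rep _ _ _ P' hs => exact ⟨rfl, P', hs⟩

lemma step_inp_inv {x y : Name} {P : Proc} {μ : Act} {P' : Proc}
    (h : Step (.input x y P) μ P') : ∃ z, μ = .inp x z := by
  cases h; exact ⟨_, rfl⟩

lemma step_Pb {μ : Act} {P' : Proc} (h : Step Pb μ P') : ∃ z, μ = .inp 1 z :=
  step_inp_inv (show Step (.input 1 3 _) μ P' from h)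

lemma step_Pa {μ : Act} {P' : Proc} (h : Step Pa μ P') : ∃ z, μ = .inp 0 z :=
  step_inp_inv (show Step (.input 0 3 _) μ P' from h)

lemma live_pnb {v : Label} {μ : Act} {l : Label}
    (h : Live v μ (.par .nil (.output 1 3 l .nil))) : v = l ∧ μ = .out 1 3 :=
  live_output_inv (live_par_nil h)

/-- Core inversion: a parallel composition of an "output-only" part and the
    b-replication. -/
lemma live_core {v : Label} {μ : Act} {l r : Label} {X : LProc}
    (hX : ∀ {v' : Label} {μ' : Act}, Live v' μ' X → v' = l ∧ μ' = .out 1 3)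
    (h : Live v μ (.par X (.rep r Pb))) :
    (μ = .tau ∧ (v = l ∨ v = r)) ∨ (μ = .out 1 3 ∧ v = l)
      ∨ (∃ z, μ = .inp 1 z ∧ v = r) := by
  cases h with
  | parL _ _ _ _ h1 h2 =>
      obtain ⟨rfl, rfl⟩ := hX h1
      exact Or.inr (Or.inl ⟨rfl, rfl⟩)
  | parR _ _ _ _ h1 h2 =>
      obtain ⟨rfl, P', hs⟩ := live_rep_inv h1
      obtain ⟨z, rfl⟩ := step_Pb hs
      exact Or.inr (Or.inr ⟨z, rfl, rfl⟩)
  | comL₁ _ _ _ _ _ _ h1 h2 => exact Act.noConfusion (hX h1).2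
  | comL₂ _ _ _ _ _ _ h1 h2 => exact Act.noConfusion (hX h1).2
  | comR₁ _ _ _ _ _ _ h1 h2 => exact Or.inl ⟨rfl, Or.inl (hX h1).1⟩
  | comR₂ _ _ _ _ _ _ h1 h2 => exact Or.inl ⟨rfl, Or.inr (live_rep_inv h2).1⟩
  | closeL₁ _ _ _ _ _ _ h1 h2 _ =>
      obtain ⟨P', hs⟩ := (live_rep_inv h2).2
      obtain ⟨z, hz⟩ := step_Pb hs
      exact Act.noConfusion hz
  | closeL₂ _ _ _ _ _ _ h1 h2 _ =>
      obtain ⟨P', hs⟩ := (live_rep_inv h2).2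
      obtain ⟨z, hz⟩ := step_Pb hs
      exact Act.noConfusion hz
  | closeR₁ _ _ _ _ _ _ h1 h2 _ => exact Act.noConfusion (hX h1).2
  | closeR₂ _ _ _ _ _ _ h1 h2 _ => exact Act.noConfusion (hX h1).2

lemma live_Bpre (k : ℕ) {v : Label} {μ : Act} (h : Live v μ (Bpre k)) :
    (μ = .tau ∧ (v = blab k ∨ v = rB k)) ∨ (μ = .out 1 3 ∧ v = blab k)
      ∨ (∃ z, μ = .inp 1 z ∧ v = rB k) := by
  cases k with
  | zero =>
      exact live_core (fun h' => live_output_inv h')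
        (show Live v μ (.par (.output 1 3 v2 .nil) (.rep (rB 0) Pb)) from h)
  | succ k =>
      have h1 : Live v μ (Tail k) :=
        live_grav k (live_par_nil
          (show Live v μ (.par .nil (grav k (Tail k))) from h))
      exact live_core (fun h' => live_pnb h')
        (show Live v μ (.par (.par .nil (.output 1 3 (bl k) .nil))
          (.rep (rB (k+1)) Pb)) from h1)

lemma live_resBpre (k : ℕ) {v : Label} {μ : Act}
    (h : Live v μ (.res 1 (Bpre k))) :
    μ = .tau ∧ (v = blab k ∨ v = rB k) := by
  cases h with
  | res _ _ _ _ h1 h2 =>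
      rcases live_Bpre k h1 with ⟨rfl, hv⟩ | ⟨rfl, rfl⟩ | ⟨z, rfl, rfl⟩
      · exact ⟨rfl, hv⟩
      · exact (h2 (by simp [Act.n, Act.fnA, Act.bn])).elim
      · exact (h2 (by simp [Act.n, Act.fnA, Act.bn])).elim
  | open_ _ _ _ _ h1 h2 =>
      rcases live_Bpre k h1 with ⟨he, _⟩ | ⟨he, _⟩ | ⟨z, he, _⟩
      · exact Act.noConfusion he
      · injection he with h3 h4; exact absurd h4 (by decide)
      · exact Act.noConfusion he

lemma live_GA (k : ℕ) {v : Label} {μ : Act} (h : Live v μ (GA k)) :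
    v = rA k ∧ ∃ z, μ = .inp 0 z := by
  have h1 := live_wrap k (show Live v μ (wrapNil k (.rep (rA k) Pa)) from h)
  obtain ⟨rfl, P', hs⟩ := live_rep_inv h1
  obtain ⟨z, rfl⟩ := step_Pa hs
  exact ⟨rfl, z, rfl⟩

lemma live_left_tau (k : ℕ) {v : Label}
    (h : Live v .tau (.par (GA k) (.res 1 (Bpre k)))) :
    v = blab k ∨ v = rB k := by
  cases h with
  | parL _ _ _ _ h1 h2 =>
      obtain ⟨_, z, hz⟩ := live_GA k h1
      exact Act.noConfusion hz
  | parR _ _ _ _ h1 h2 => exact (live_resBpre k h1).2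
  | comL₁ _ _ _ _ _ _ h1 h2 => exact Act.noConfusion (live_resBpre k h2).1
  | comL₂ _ _ _ _ _ _ h1 h2 => exact Act.noConfusion (live_resBpre k h2).1
  | comR₁ _ _ _ _ _ _ h1 h2 =>
      obtain ⟨_, z, hz⟩ := live_GA k h1
      exact Act.noConfusion hz
  | comR₂ _ _ _ _ _ _ h1 h2 =>
      obtain ⟨_, z, hz⟩ := live_GA k h1
      exact Act.noConfusion hz
  | closeL₁ _ _ _ _ _ _ h1 h2 _ => exact Act.noConfusion (live_resBpre k h2).1
  | closeL₂ _ _ _ _ _ _ h1 h2 _ => exact Act.noConfusion (live_resBpre k h2).1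
  | closeR₁ _ _ _ _ _ _ h1 h2 _ =>
      obtain ⟨_, z, hz⟩ := live_GA k h1
      exact Act.noConfusion hz
  | closeR₂ _ _ _ _ _ _ h1 h2 _ =>
      obtain ⟨_, z, hz⟩ := live_GA k h1
      exact Act.noConfusion hz

lemma live_left_notout (k : ℕ) {v : Label} {x y : Name}
    (h : Live v (.out x y) (.par (GA k) (.res 1 (Bpre k)))) : False := by
  cases h with
  | parL _ _ _ _ h1 h2 =>
      obtain ⟨_, z, hz⟩ := live_GA k h1
      exact Act.noConfusion hz
  | parR _ _ _ _ h1 h2 => exact Act.noConfusion (live_resBpre k h1).1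

lemma live_left_notbout (k : ℕ) {v : Label} {x y : Name}
    (h : Live v (.bout x y) (.par (GA k) (.res 1 (Bpre k)))) : False := by
  cases h with
  | parL _ _ _ _ h1 h2 =>
      obtain ⟨_, z, hz⟩ := live_GA k h1
      exact Act.noConfusion hz
  | parR _ _ _ _ h1 h2 => exact Act.noConfusion (live_resBpre k h1).1

lemma live_rho {v : Label} {μ : Act} (h : Live v μ rho) :
    v = v4 ∧ ∃ z, μ = .inp 0 z :=
  live_input_inv (show Live v μ (.input 0 3 v4 (.omegaPre .nil)) from h)

lemma live_Spre (k : ℕ) {v : Label} (h : Live v .tau (Spre k)) :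
    v = blab k ∨ v = rB k := by
  cases h with
  | parL _ _ _ _ h1 h2 => exact live_left_tau k h1
  | parR _ _ _ _ h1 h2 =>
      obtain ⟨_, z, hz⟩ := live_rho h1
      exact Act.noConfusion hz
  | comL₁ _ _ _ _ _ _ h1 h2 =>
      obtain ⟨_, z, hz⟩ := live_rho h2
      exact Act.noConfusion hz
  | comL₂ _ _ _ _ _ _ h1 h2 =>
      obtain ⟨_, z, hz⟩ := live_rho h2
      exact Act.noConfusion hz
  | comR₁ _ _ _ _ _ _ h1 h2 => exact (live_left_notout k h1).elim
  | comR₂ _ _ _ _ _ _ h1 h2 => exact (live_left_notout k h1).elim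
  | closeL₁ _ _ _ _ _ _ h1 h2 _ =>
      obtain ⟨_, z, hz⟩ := live_rho h2
      exact Act.noConfusion hz
  | closeL₂ _ _ _ _ _ _ h1 h2 _ =>
      obtain ⟨_, z, hz⟩ := live_rho h2
      exact Act.noConfusion hz
  | closeR₁ _ _ _ _ _ _ h1 h2 _ => exact (live_left_notbout k h1).elim
  | closeR₂ _ _ _ _ _ _ h1 h2 _ => exact (live_left_notbout k h1).elim

lemma v4_live (k : ℕ) : Live v4 .tau (Smid k) := by
  have ha : Live (al k) (.out 0 3) (.par (GA k) (.res 1 (Bmid k))) := by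
    refine Live.parR _ _ _ _ ?_ (by intro y hy; simp [Act.bn] at hy)
    refine Live.res _ _ _ _ ?_ (by simp [Act.n, Act.fnA, Act.bn])
    refine Live.parR _ _ _ _ ?_ (by intro y hy; simp [Act.bn] at hy)
    refine live_grav_intro k ?_
    exact Live.parL _ _ _ _
      (Live.parL _ _ _ _ (Live.output (al k) 0 3 .nil)
        (by intro y hy; simp [Act.bn] at hy))
      (by intro y hy; simp [Act.bn] at hy)
  exact Live.comR₂ (al k) v4 0 3 _ rho ha (Live.input v4 0 3 3 (.omegaPre .nil))

/-! #### The computation -/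

def cseq (n : ℕ) : LProc := if n % 2 = 0 then Spre (n / 2) else Smid (n / 2)

lemma cseq_even (k : ℕ) : cseq (2 * k) = Spre k := by
  have h1 : 2 * k % 2 = 0 := by omega
  have h2 : 2 * k / 2 = k := by omega
  simp [cseq, h1, h2]

lemma cseq_odd (k : ℕ) : cseq (2 * k + 1) = Smid k := by
  have h1 : ¬ ((2 * k + 1) % 2 = 0) := by omega
  have h2 : (2 * k + 1) / 2 = k := by omega
  simp [cseq, h1, h2]

lemma rB_len (k : ℕ) : (rB k).1.length = k + 2 := by
  simp [rB, rBs]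

lemma blab_len (k : ℕ) : (blab (k+1)).1.length = k + 4 := by
  simp [blab, bl, rBs]

end Witness

namespace Witness

def Ewit : LProc :=
  .par (.rep (rA 0) Pa)
    (.res 1 (.par (.output 1 3 v2 .nil) (.rep (rB 0) Pb)))

lemma wf_Ewit : Wf Ewit := by
  refine Wf.par _ _ (Wf.rep _ _)
    (Wf.res _ _ (Wf.par _ _ ?_ (Wf.rep _ _) ?_)) ?_
  · exact Wf.prefOut v2 1 3 .nil
  · intro l0 h0 l1 h1
    simp [LProc.top] at h0 h1
    subst h0; subst h1
    exact ⟨by decide, by decide⟩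
  · intro l0 h0 l1 h1
    simp [LProc.top] at h0 h1
    subst h0
    rcases h1 with rfl | rfl
    · exact ⟨by decide, by decide⟩
    · exact ⟨by decide, by decide⟩

lemma wf_rho : Wf rho := Wf.prefIn v4 0 3 (.omegaPre .nil)

lemma wf_pair : Wf (.par Ewit rho) := by
  refine Wf.par _ _ wf_Ewit wf_rho ?_
  intro l0 h0 l1 h1
  simp [Ewit, rho, LProc.top] at h0 h1
  subst h1
  rcases h0 with rfl | rfl | rfl
  · exact ⟨by decide, by decide⟩
  · exact ⟨by decide, by decide⟩
  · exact ⟨by decide, by decide⟩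

lemma noOmega_Ewit : Ewit.noOmega := by
  simp [Ewit, LProc.noOmega, Pa, Pb, Proc.noOmega]

end Witness

end PiFair
open PiFair in
/-- Some weak-fair computation is not strong-fair; witnessed by
    E = !a | (νb)(b̄ | !b.(ā | b̄)) and ρ = a.ω (names a := 0, b := 1,
    with dummy object name 3). -/
theorem weakFair_not_strongFair :
    ∃ E ρ : LProc, Wf E ∧ E.noOmega ∧ Wf ρ ∧ Wf (.par E ρ) ∧
      E.unl = Proc.par (.rep (.input 0 3 .nil))
        (.res 1 (.par (.output 1 3 .nil)
          (.rep (.input 1 3 (.par (.output 0 3 .nil) (.output 1 3 .nil)))))) ∧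
      ρ.unl = Proc.input 0 3 (.omegaPre .nil) ∧
      ∃ c : MaxComp LTauStep (.par E ρ), WeakFair c ∧ ¬ StrongFair c := by
  classical
  refine ⟨Witness.Ewit, Witness.rho, Witness.wf_Ewit, Witness.noOmega_Ewit,
    Witness.wf_rho, Witness.wf_pair, rfl, rfl, ?_⟩
  refine ⟨⟨Witness.cseq, ?_, ?_⟩, ?_, ?_⟩
  · have h := Witness.cseq_even 0
    exact h
  · intro i
    left
    rcases Nat.even_or_odd i with ⟨k, hk⟩ | ⟨k, hk⟩
    · subst hk
      rw [show k + k = 2 * k by ring]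
      rw [Witness.cseq_even, Witness.cseq_odd]
      exact Witness.lstep_pre_mid k
    · subst hk
      rw [Witness.cseq_odd, show 2 * k + 1 + 1 = 2 * (k + 1) by ring,
        Witness.cseq_even]
      exact Witness.lstep_mid_pre k
  · intro v i
    refine ⟨2 * (i + v.1.length + 1), by omega, ?_⟩
    show v ∉ Ll (Witness.cseq (2 * (i + v.1.length + 1)))
    rw [Witness.cseq_even]
    intro hv
    have h := Witness.live_Spre (i + v.1.length + 1) hv
    rcases h with h | h
    · have h2 := congrArg (fun l : Label => l.1.length) h
      simp only [Witness.blab_len] at h2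
      omega
    · have h2 := congrArg (fun l : Label => l.1.length) h
      simp only [Witness.rB_len] at h2
      omega
  · intro hs
    obtain ⟨i, hi⟩ := hs Witness.v4
    exact hi (2 * i + 1) (by omega)
      (by show Witness.v4 ∈ Ll (Witness.cseq (2 * i + 1))
          rw [Witness.cseq_odd]; exact Witness.v4_live i)
end

section
/- There exist a labeled choiceless π-calculus process E ∈ 𝒫ᵉ and a labeled observer ρ ∈ 𝒪ᵉ such that E sfmust ρ holds but E wfmust ρ fails. In particular this holds for E = !_{v⁰₁}a | (νb)(b̄_{v⁰₂} | !_{v⁰₃}b.(ā | b̄)) and ρ = a_{v₄}.ω. -/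
namespace PiFairWitness
open PiFair

/-! ### Concrete processes and labels -/

abbrev Pa : Proc := .input 0 3 .nil
abbrev QbBody : Proc := .par (.output 0 3 .nil) (.output 1 3 .nil)
abbrev Qb : Proc := .input 1 3 QbBody

def tAs : ℕ → List Bool
  | 0 => [false, false]
  | k+1 => tAs k ++ [true]

def tBs : ℕ → List Bool
  | 0 => [false, true, true]
  | k+1 => tBs k ++ [true]

abbrev tA (k : ℕ) : Label := (tAs k, k)
abbrev tB (k : ℕ) : Label := (tBs k, k)

def lbs : ℕ → List Bool
  | 0 => [false, true, false]
  | k+1 => (tBs k ++ [false]) ++ [true]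

abbrev lb (k : ℕ) : Label := (lbs k, k)

/-- label of the ā created by unfolding the `k`-th replication on b. -/
abbrev laL (k : ℕ) : Label := ((tBs k ++ [false]) ++ [false], k + 1)

abbrev l4 : Label := ([true], 0)

abbrev abar (l : Label) : LProc := .output 0 3 l .nil
abbrev bbar (l : Label) : LProc := .output 1 3 l .nil
abbrev RepA (k : ℕ) : LProc := .rep (tA k) Pa
abbrev RepB (k : ℕ) : LProc := .rep (tB k) Qb

def aI : ℕ → LProc → LProc
  | 0, X => X
  | k+1, X => aI k (.par .nil X)

def dI : ℕ → LProc → LProc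
  | 0, X => X
  | k+1, X => dI k (.par (.par .nil .nil) X)

abbrev Avar (k : ℕ) : LProc := aI k (RepA k)

def Beven : ℕ → LProc
  | 0 => .par (bbar (lb 0)) (RepB 0)
  | k+1 => .par .nil (dI k (.par (.par .nil (bbar (lb (k+1)))) (RepB (k+1))))

def Bodd (k : ℕ) : LProc :=
  .par .nil (dI k (.par (.par (abar (laL k)) (bbar (lb (k+1)))) (RepB (k+1))))

abbrev rho : LProc := .input 0 3 l4 (.omegaPre .nil)

abbrev Ewit : LProc := .par (RepA 0) (.res 1 (.par (bbar (lb 0)) (RepB 0)))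

abbrev Sev (k : ℕ) : LProc := .par (.par (Avar k) (.res 1 (Beven k))) rho
abbrev Sod (k : ℕ) : LProc := .par (.par (Avar k) (.res 1 (Bodd k))) rho

/-! ### Generic lemmas -/

lemma no_lstep_nil {μ E} (h : LStep .nil μ E) : False := by cases h

lemma no_live_nil {l μ} (h : Live l μ .nil) : False := by cases h

lemma liveLab {l μ S} (h : Live l μ S) : l ∈ S.lab := by
  induction h <;> simp_all [LProc.lab]

lemma stepLive {S μ S'} (h : LStep S μ S') : μ = .omega ∨ ∃ l, Live l μ S := by
  induction h with
  | input x y z l E => exact Or.inr ⟨l, Live.input l x y z E⟩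
  | output x y l E => exact Or.inr ⟨l, Live.output l x y E⟩
  | open_ x y E E' h hxy ih =>
      rcases ih with h' | ⟨l, hl⟩
      · exact absurd h' (by simp)
      · exact Or.inr ⟨l, Live.open_ l x y E hl hxy⟩
  | res y μ E E' h hn ih =>
      rcases ih with h' | ⟨l, hl⟩
      · exact Or.inl h'
      · exact Or.inr ⟨l, Live.res l μ y E hl hn⟩
  | parL μ E E' F h hbn ih =>
      rcases ih with h' | ⟨l, hl⟩
      · exact Or.inl h'
      · exact Or.inr ⟨l, Live.parL l μ E F hl hbn⟩
  | parR μ E F F' h hbn ih =>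
      rcases ih with h' | ⟨l, hl⟩
      · exact Or.inl h'
      · exact Or.inr ⟨l, Live.parR l μ E F hl hbn⟩
  | comL x y E E' F F' h1 h2 ih1 ih2 =>
      rcases ih1 with h' | ⟨l, hl⟩
      · exact absurd h' (by simp)
      · rcases ih2 with h' | ⟨l', hl'⟩
        · exact absurd h' (by simp)
        · exact Or.inr ⟨l, Live.comL₁ l l' x y E F hl hl'⟩
  | comR x y E E' F F' h1 h2 ih1 ih2 =>
      rcases ih1 with h' | ⟨l, hl⟩
      · exact absurd h' (by simp)
      · rcases ih2 with h' | ⟨l', hl'⟩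
        · exact absurd h' (by simp)
        · exact Or.inr ⟨l, Live.comR₁ l l' x y E F hl hl'⟩
  | closeL x y E E' F F' h1 h2 hy ih1 ih2 =>
      rcases ih1 with h' | ⟨l, hl⟩
      · exact absurd h' (by simp)
      · rcases ih2 with h' | ⟨l', hl'⟩
        · exact absurd h' (by simp)
        · exact Or.inr ⟨l, Live.closeL₁ l l' x y E F hl hl' hy⟩
  | closeR x y E E' F F' h1 h2 hy ih1 ih2 =>
      rcases ih1 with h' | ⟨l, hl⟩
      · exact absurd h' (by simp)
      · rcases ih2 with h' | ⟨l', hl'⟩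
        · exact absurd h' (by simp)
        · exact Or.inr ⟨l, Live.closeR₁ l l' x y E F hl hl' hy⟩
  | rep μ l P P' h => exact Or.inr ⟨l, Live.rep l μ P P' h⟩
  | omega_ o => exact Or.inl rfl

lemma step_omega_proc {P μ P'} (h : Step P μ P') (hno : P.noOmega) : μ ≠ .omega := by
  induction h <;> simp_all [Proc.noOmega]

lemma step_omega {E μ E'} (h : LStep E μ E') (hno : E.noOmega) : μ ≠ .omega := by
  induction h with
  | rep μ l P P' h => exact step_omega_proc h hno
  | _ => simp_all [LProc.noOmega]

end PiFairWitness

namespace PiFairWitness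
open PiFair

/-! ### Grammar of reachable B-states -/

inductive Gar : LProc → Prop
  | nil : Gar .nil
  | par : ∀ {x y}, Gar x → Gar y → Gar (.par x y)

/-- garbage plus finitely many unguarded ā's -/
inductive XAs : LProc → Prop
  | gar : ∀ {x}, Gar x → XAs x
  | abar : ∀ l, XAs (abar l)
  | par : ∀ {x y}, XAs x → XAs y → XAs (.par x y)

/-- garbage plus ā's plus exactly one unguarded b̄ -/
inductive WB : LProc → Prop
  | bbar : ∀ l, WB (bbar l)
  | parL : ∀ {x y}, WB x → XAs y → WB (.par x y)
  | parR : ∀ {x y}, XAs x → WB y → WB (.par x y)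

inductive Chain : LProc → Prop
  | last : ∀ {w} (t : Label), WB w → Chain (.par w (.rep t Qb))
  | cons : ∀ {x T}, XAs x → Chain T → Chain (.par x T)

inductive ASt : LProc → Prop
  | base : ∀ t, ASt (.rep t Pa)
  | cons : ∀ {A}, ASt A → ASt (.par .nil A)

def LiveA (B : LProc) : Prop := ∃ l, Live l (.out 0 3) B

lemma gar_step {x μ y} (hg : Gar x) (h : LStep x μ y) : False := by
  induction hg generalizing μ y with
  | nil => exact no_lstep_nil h
  | par hx hy ihx ihy =>
      cases h with
      | parL _ _ _ _ h _ => exact ihx h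
      | parR _ _ _ _ h _ => exact ihy h
      | comL _ _ _ _ _ _ h _ => exact ihx h
      | comR _ _ _ _ _ _ h _ => exact ihx h
      | closeL _ _ _ _ _ _ h _ _ => exact ihx h
      | closeR _ _ _ _ _ _ h _ _ => exact ihx h

lemma xas_step {x μ y} (hg : XAs x) (h : LStep x μ y) : μ = .out 0 3 ∧ XAs y := by
  induction hg generalizing μ y with
  | gar hx => exact absurd h (fun h => gar_step hx h)
  | abar l =>
      cases h with
      | output => exact ⟨rfl, XAs.gar Gar.nil⟩
  | par hx hy ihx ihy =>
      cases h with
      | parL _ _ _ _ h _ =>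
          obtain ⟨he, hx'⟩ := ihx h
          exact ⟨he, XAs.par hx' hy⟩
      | parR _ _ _ _ h _ =>
          obtain ⟨he, hy'⟩ := ihy h
          exact ⟨he, XAs.par hx hy'⟩
      | comL _ _ _ _ _ _ h _ => exact absurd (ihx h).1 (by simp)
      | comR _ _ _ _ _ _ _ h => exact absurd (ihy h).1 (by simp)
      | closeL _ _ _ _ _ _ h _ _ => exact absurd (ihx h).1 (by simp)
      | closeR _ _ _ _ _ _ h _ _ => exact absurd (ihx h).1 (by simp)

lemma wb_step {x μ y} (hg : WB x) (h : LStep x μ y) :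
    (μ = .out 0 3 ∧ WB y) ∨ (μ = .out 1 3 ∧ XAs y) := by
  induction hg generalizing μ y with
  | bbar l =>
      cases h with
      | output => exact Or.inr ⟨rfl, XAs.gar Gar.nil⟩
  | parL hx hy ihx =>
      cases h with
      | parL _ _ _ _ h _ =>
          rcases ihx h with ⟨he, hx'⟩ | ⟨he, hx'⟩
          · exact Or.inl ⟨he, WB.parL hx' hy⟩
          · exact Or.inr ⟨he, XAs.par hx' hy⟩
      | parR _ _ _ _ h _ =>
          obtain ⟨he, hy'⟩ := xas_step hy h
          exact Or.inl ⟨he, WB.parL hx hy'⟩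
      | comL _ _ _ _ _ _ h _ => rcases ihx h with ⟨he, _⟩ | ⟨he, _⟩ <;> simp at he
      | comR _ _ _ _ _ _ _ h => exact absurd (xas_step hy h).1 (by simp)
      | closeL _ _ _ _ _ _ h _ _ => rcases ihx h with ⟨he, _⟩ | ⟨he, _⟩ <;> simp at he
      | closeR _ _ _ _ _ _ h _ _ => rcases ihx h with ⟨he, _⟩ | ⟨he, _⟩ <;> simp at he
  | parR hx hy ihy =>
      cases h with
      | parL _ _ _ _ h _ =>
          obtain ⟨he, hx'⟩ := xas_step hx h
          exact Or.inl ⟨he, WB.parR hx' hy⟩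
      | parR _ _ _ _ h _ =>
          rcases ihy h with ⟨he, hy'⟩ | ⟨he, hy'⟩
          · exact Or.inl ⟨he, WB.parR hx hy'⟩
          · exact Or.inr ⟨he, XAs.par hx hy'⟩
      | comL _ _ _ _ _ _ h _ => exact absurd (xas_step hx h).1 (by simp)
      | comR _ _ _ _ _ _ _ h => rcases ihy h with ⟨he, _⟩ | ⟨he, _⟩ <;> simp at he
      | closeL _ _ _ _ _ _ h _ _ => exact absurd (xas_step hx h).1 (by simp)
      | closeR _ _ _ _ _ _ h _ _ => exact absurd (xas_step hx h).1 (by simp)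

lemma repB_step {t μ y} (h : LStep (.rep t Qb) μ y) :
    ∃ z, μ = .inp 1 z ∧
      y = .par (.par (.output 0 z ((t.1 ++ [false]) ++ [false], t.2 + 1) .nil)
                     (.output 1 z ((t.1 ++ [false]) ++ [true], t.2 + 1) .nil))
              (.rep (t.1 ++ [true], t.2 + 1) Qb) := by
  cases h with
  | rep μ l P P' h =>
      cases h with
      | input x y z P =>
          refine ⟨z, rfl, ?_⟩
          simp [labelWith, Proc.subst]

lemma repA_step {t μ y} (h : LStep (.rep t Pa) μ y) :
    ∃ z, μ = .inp 0 z ∧ y = .par .nil (.rep (t.1 ++ [true], t.2 + 1) Pa) := by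
  cases h with
  | rep μ l P P' h =>
      cases h with
      | input x y z P => exact ⟨z, rfl, by simp [labelWith, Proc.subst]⟩

lemma ast_step {A μ A'} (hA : ASt A) (h : LStep A μ A') :
    (∃ z, μ = .inp 0 z) ∧ ASt A' := by
  induction hA generalizing μ A' with
  | base t =>
      obtain ⟨z, he, hy⟩ := repA_step h
      subst hy
      exact ⟨⟨z, he⟩, ASt.cons (ASt.base _)⟩
  | cons hA ih =>
      cases h with
      | parL _ _ _ _ h _ => exact absurd h no_lstep_nil
      | parR _ _ _ _ h _ =>
          obtain ⟨hz, hA'⟩ := ih h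
          exact ⟨hz, ASt.cons hA'⟩
      | comL _ _ _ _ _ _ h _ => exact absurd h no_lstep_nil
      | comR _ _ _ _ _ _ h _ => exact absurd h no_lstep_nil
      | closeL _ _ _ _ _ _ h _ _ => exact absurd h no_lstep_nil
      | closeR _ _ _ _ _ _ h _ _ => exact absurd h no_lstep_nil

lemma chain_step {B μ B'} (hB : Chain B) (h : LStep B μ B') :
    (μ = .out 0 3 ∧ Chain B') ∨ (μ = .out 1 3) ∨ (∃ z, μ = .inp 1 z) ∨
      (μ = .tau ∧ Chain B' ∧ LiveA B') := by
  induction hB generalizing μ B' with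
  | last t hw =>
      cases h with
      | parL _ _ _ _ h _ =>
          rcases wb_step hw h with ⟨he, hw'⟩ | ⟨he, _⟩
          · exact Or.inl ⟨he, Chain.last t hw'⟩
          · exact Or.inr (Or.inl he)
      | parR _ _ _ _ h _ =>
          obtain ⟨z, he, _⟩ := repB_step h
          exact Or.inr (Or.inr (Or.inl ⟨z, he⟩))
      | comL _ _ _ _ _ _ h _ =>
          rcases wb_step hw h with ⟨he, _⟩ | ⟨he, _⟩ <;> simp at he
      | comR x y _ _ _ _ h1 h2 =>
          obtain ⟨z, he, hy⟩ := repB_step h2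
          rcases wb_step hw h1 with ⟨he2, _⟩ | ⟨he2, hw'⟩
          · simp_all
          · have hx1 : x = 1 := by simp_all
            have hy3 : y = 3 := by simp_all
            have hz3 : z = 3 := by simp_all
            subst hx1; subst hy3; subst hz3; subst hy
            refine Or.inr (Or.inr (Or.inr ⟨rfl, ?_, ?_⟩))
            · exact Chain.cons hw' (Chain.last _ (WB.parR (XAs.abar _) (WB.bbar _)))
            · refine ⟨((t.1 ++ [false]) ++ [false], t.2 + 1), ?_⟩
              refine Live.parR _ _ _ _ ?_ (by simp [Act.bn])
              refine Live.parL _ _ _ _ ?_ (by simp [Act.bn])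
              refine Live.parL _ _ _ _ ?_ (by simp [Act.bn])
              exact Live.output _ 0 3 _
      | closeL _ _ _ _ _ _ h _ _ =>
          rcases wb_step hw h with ⟨he, _⟩ | ⟨he, _⟩ <;> simp at he
      | closeR _ _ _ _ _ _ h1 h2 _ =>
          rcases wb_step hw h1 with ⟨he, _⟩ | ⟨he, _⟩ <;> simp at he
  | cons hx hT ih =>
      cases h with
      | parL _ _ _ _ h _ =>
          obtain ⟨he, hx'⟩ := xas_step hx h
          exact Or.inl ⟨he, Chain.cons hx' hT⟩
      | parR _ _ _ _ h _ =>
          rcases ih h with ⟨he, hT'⟩ | he | he | ⟨he, hT', hl⟩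
          · exact Or.inl ⟨he, Chain.cons hx hT'⟩
          · exact Or.inr (Or.inl he)
          · exact Or.inr (Or.inr (Or.inl he))
          · refine Or.inr (Or.inr (Or.inr ⟨he, Chain.cons hx hT', ?_⟩))
            obtain ⟨l, hl⟩ := hl
            exact ⟨l, Live.parR _ _ _ _ hl (by simp [Act.bn])⟩
      | comL _ _ _ _ _ _ h _ => exact absurd (xas_step hx h).1 (by simp)
      | comR x y _ _ _ _ h1 h2 =>
          obtain ⟨he, _⟩ := xas_step hx h1
          rcases ih h2 with ⟨he2, _⟩ | he2 | ⟨z, he2⟩ | ⟨he2, _⟩ <;>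
            simp_all
      | closeL _ _ _ _ _ _ h _ _ => exact absurd (xas_step hx h).1 (by simp)
      | closeR _ _ _ _ _ _ h _ _ => exact absurd (xas_step hx h).1 (by simp)

lemma wb_out {w} (hw : WB w) : ∃ w', LStep w (.out 1 3) w' := by
  induction hw with
  | bbar l => exact ⟨.nil, LStep.output _ _ _ _⟩
  | parL _ _ ih =>
      obtain ⟨w', hw'⟩ := ih
      exact ⟨_, LStep.parL _ _ _ _ hw' (by simp [Act.bn])⟩
  | parR _ _ ih =>
      obtain ⟨w', hw'⟩ := ih
      exact ⟨_, LStep.parR _ _ _ _ hw' (by simp [Act.bn])⟩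

lemma chain_tau {B} (hB : Chain B) : ∃ B', LStep B .tau B' := by
  induction hB with
  | last t hw =>
      obtain ⟨w', hw'⟩ := wb_out hw
      exact ⟨_, LStep.comR 1 3 _ _ _ _ hw' (LStep.rep _ _ _ _ (Step.input 1 3 3 QbBody))⟩
  | cons hx _ ih =>
      obtain ⟨B', hB'⟩ := ih
      exact ⟨_, LStep.parR _ _ _ _ hB' (by simp [Act.bn])⟩

end PiFairWitness

namespace PiFairWitness
open PiFair

lemma res_out_inv {B μ R'} (hB : Chain B) (h : LStep (.res 1 B) μ R') :
    (μ = .out 0 3 ∧ ∃ B', Chain B' ∧ R' = .res 1 B' ∧ LiveA B) ∨ μ = .tau ∧ ∃ B', Chain B' ∧ R' = .res 1 B' ∧ LiveA B' := by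
  cases h with
  | open_ x y P P' h hxy =>
      rcases chain_step hB h with ⟨he, _⟩ | he | ⟨z, he⟩ | ⟨he, _⟩ <;> simp_all
  | res y μ P P' h hn =>
      rcases chain_step hB h with ⟨he, hB'⟩ | he | ⟨z, he⟩ | ⟨he, hB', hl⟩
      · subst he
        refine Or.inl ⟨rfl, P', hB', rfl, ?_⟩
        rcases stepLive h with h' | h'
        · simp at h'
        · exact h'
      · subst he; simp [Act.n, Act.fnA, Act.bn] at hn
      · subst he; simp [Act.n, Act.fnA, Act.bn] at hn
      · subst he; exact Or.inr ⟨rfl, P', hB', rfl, hl⟩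

lemma res_bout_inv {B x y R'} (hB : Chain B) (h : LStep (.res 1 B) (.bout x y) R') : False := by
  cases h with
  | open_ x y P P' h hxy =>
      rcases chain_step hB h with ⟨he, _⟩ | he | ⟨z, he⟩ | ⟨he, _⟩ <;> simp_all
  | res y μ P P' h hn =>
      rcases chain_step hB h with ⟨he, _⟩ | he | ⟨z, he⟩ | ⟨he, _⟩ <;> simp_all

/-- Main invariant preservation for τ-steps from an invariant state. -/
lemma inv_step {A B S'} (hA : ASt A) (hB : Chain B)
    (h : LStep (.par (.par A (.res 1 B)) rho) .tau S') :
    (∃ A' B', ASt A' ∧ Chain B' ∧ S' = .par (.par A' (.res 1 B')) rho ∧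
        (LiveA B' ∨ LiveA B)) ∨ (∃ T, LStep S' .omega T) := by
  cases h with
  | parL _ _ _ _ h1 _ =>
      -- τ-step inside E
      cases h1 with
      | parL _ _ _ _ h2 _ =>
          obtain ⟨⟨z, he⟩, _⟩ := ast_step hA h2
          simp at he
      | parR _ _ _ _ h2 _ =>
          rcases res_out_inv hB h2 with ⟨he, _⟩ | ⟨_, B', hB', hR, hl⟩
          · simp at he
          · subst hR
            exact Or.inl ⟨A, B', hA, hB', rfl, Or.inl hl⟩
      | comL x y _ _ _ _ h2 h3 =>
          rcases res_out_inv hB h3 with ⟨he, B', hB', hR, hl⟩ | ⟨he, _⟩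
          · obtain ⟨_, hA'⟩ := ast_step hA h2
            subst hR
            exact Or.inl ⟨_, B', hA', hB', rfl, Or.inr hl⟩
          · simp at he
      | comR x y _ _ _ _ h2 h3 =>
          obtain ⟨⟨z, he⟩, _⟩ := ast_step hA h2
          simp at he
      | closeL x y _ _ _ _ h2 h3 _ =>
          exact absurd h3 (fun h3 => res_bout_inv hB h3)
      | closeR x y _ _ _ _ h2 h3 _ =>
          obtain ⟨⟨z, he⟩, _⟩ := ast_step hA h2
          simp at he
  | parR _ _ _ _ h1 _ => cases h1
  | comL x y _ _ _ _ h1 h2 => cases h2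
  | comR x y E E' F F' h1 h2 =>
      -- communication with the observer: success next
      cases h2 with
      | input =>
          exact Or.inr ⟨_, LStep.parR _ _ _ _ (LStep.omega_ _) (by simp [Act.bn])⟩
  | closeL x y _ _ _ _ h1 h2 _ => cases h2
  | closeR x y _ _ _ _ h1 h2 _ =>
      cases h1 with
      | parL _ _ _ _ h2 _ =>
          obtain ⟨⟨z, he⟩, _⟩ := ast_step hA h2
          simp at he
      | parR _ _ _ _ h2 _ => exact absurd h2 (fun h2 => res_bout_inv hB h2)

lemma liveA_l4 {A B} (hl : LiveA B) :
    Live l4 .tau (.par (.par A (.res 1 B)) rho) := by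
  obtain ⟨l, hl⟩ := hl
  refine Live.comR₂ l l4 0 3 _ _ ?_ ?_
  · refine Live.parR _ _ _ _ ?_ (by simp [Act.bn])
    refine Live.res _ _ _ _ hl (by simp [Act.n, Act.fnA, Act.bn])
  · exact Live.input l4 0 3 3 _

lemma sfmust_holds : SfMust Ewit rho := by
  intro c hsf
  by_contra hns
  -- invariant along the computation
  have hInv : ∀ j, ∃ A B, ASt A ∧ Chain B ∧ c.seq j = .par (.par A (.res 1 B)) rho := by
    intro j
    induction j with
    | zero =>
        refine ⟨RepA 0, .par (bbar (lb 0)) (RepB 0), ASt.base _, Chain.last _ (WB.bbar _), ?_⟩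
        rw [c.init]
    | succ j ih =>
        obtain ⟨A, B, hA, hB, hseq⟩ := ih
        rcases c.succ j with hstep | ⟨_, heq⟩
        · rw [hseq] at hstep
          rcases inv_step hA hB hstep with ⟨A', B', hA', hB', hS, _⟩ | ⟨T, hT⟩
          · exact ⟨A', B', hA', hB', hS⟩
          · exact absurd ⟨j+1, T, hT⟩ hns
        · exact ⟨A, B, hA, hB, heq ▸ hseq⟩
  -- l4 is live at j or at j+1, for every j
  have hlive : ∀ j, Live l4 .tau (c.seq j) ∨ Live l4 .tau (c.seq (j+1)) := by
    intro j
    obtain ⟨A, B, hA, hB, hseq⟩ := hInv j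
    by_cases hLA : LiveA B
    · exact Or.inl (hseq ▸ liveA_l4 hLA)
    · -- there is a τ-step, and it must produce a live ā
      obtain ⟨B', hB'⟩ := chain_tau hB
      have hstep_ex0 : ∃ T, LTauStep (.par (.par A (.res 1 B)) rho) T :=
        ⟨_, LStep.parL _ _ _ _
          (LStep.parR _ _ _ _
            (LStep.res _ _ _ _ hB' (by simp [Act.n, Act.fnA, Act.bn])) (by simp [Act.bn]))
          (by simp [Act.bn])⟩
      have hstep_ex : ∃ T, LTauStep (c.seq j) T := by rw [hseq]; exact hstep_ex0
      rcases c.succ j with hstep | ⟨hstuck, _⟩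
      · rw [hseq] at hstep
        rcases inv_step hA hB hstep with ⟨A', B'', hA', hB'', hS, hl⟩ | ⟨T, hT⟩
        · rcases hl with hl | hl
          · exact Or.inr (hS ▸ liveA_l4 hl)
          · exact absurd hl hLA
        · exact absurd ⟨j+1, T, hT⟩ hns
      · obtain ⟨T, hT⟩ := hstep_ex
        exact absurd hT (hstuck T)
  obtain ⟨i, hi⟩ := hsf l4
  rcases hlive i with hl | hl
  · exact hi i le_rfl hl
  · exact hi (i+1) (Nat.le_succ i) hl

end PiFairWitness

namespace PiFairWitness
open PiFair

/-! ### The scheduled computation -/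

lemma dI_lift {k X X' μ} (hbn : ∀ y, y ∉ μ.bn) (h : LStep X μ X') :
    LStep (dI k X) μ (dI k X') := by
  induction k generalizing X X' with
  | zero => exact h
  | succ k ih =>
      exact ih (LStep.parR _ _ _ _ h (fun y hy => absurd hy (hbn y)))

lemma aI_lift {k X X' μ} (hbn : ∀ y, y ∉ μ.bn) (h : LStep X μ X') :
    LStep (aI k X) μ (aI k X') := by
  induction k generalizing X X' with
  | zero => exact h
  | succ k ih =>
      exact ih (LStep.parR _ _ _ _ h (fun y hy => absurd hy (hbn y)))

lemma repB_unfold (t : Label) :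
    LStep (.rep t Qb) (.inp 1 3)
      (.par (.par (abar ((t.1 ++ [false]) ++ [false], t.2 + 1))
                  (bbar ((t.1 ++ [false]) ++ [true], t.2 + 1)))
            (.rep (t.1 ++ [true], t.2 + 1) Qb)) := by
  have h := LStep.rep (.inp 1 3) t Qb (QbBody.subst 3 3) (Step.input 1 3 3 QbBody)
  have e : QbBody.subst 3 3 = QbBody := by decide
  rw [e] at h
  simpa [labelWith] using h

lemma repA_unfold (t : Label) :
    LStep (.rep t Pa) (.inp 0 3) (.par .nil (.rep (t.1 ++ [true], t.2 + 1) Pa)) := by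
  have h := LStep.rep (.inp 0 3) t Pa (Proc.nil.subst 3 3) (Step.input 0 3 3 .nil)
  simpa [labelWith, Proc.subst] using h

lemma stepBeo : ∀ k, LStep (Beven k) .tau (Bodd k) := by
  intro k
  cases k with
  | zero =>
      have h := LStep.comR 1 3 _ _ _ _ (LStep.output 1 3 (lb 0) .nil) (repB_unfold (tB 0))
      exact h
  | succ k =>
      refine LStep.parR _ _ _ _ ?_ (by simp [Act.bn])
      have h := LStep.comR 1 3 _ _ _ _
        (LStep.parR (.out 1 3) .nil _ _ (LStep.output 1 3 (lb (k+1)) .nil) (by simp [Act.bn]))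
        (repB_unfold (tB (k+1)))
      exact dI_lift (k := k) (by simp [Act.bn]) h

lemma stepAio : ∀ k, LStep (Avar k) (.inp 0 3) (Avar (k+1)) := by
  intro k
  have h := aI_lift (k := k) (by simp [Act.bn]) (repA_unfold (tA k))
  exact h

lemma stepBout : ∀ k, LStep (Bodd k) (.out 0 3) (Beven (k+1)) := by
  intro k
  refine LStep.parR _ _ _ _ ?_ (by simp [Act.bn])
  refine dI_lift (by simp [Act.bn]) ?_
  refine LStep.parL _ _ _ _ ?_ (by simp [Act.bn])
  refine LStep.parL _ _ _ _ ?_ (by simp [Act.bn])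
  exact LStep.output 0 3 _ .nil

lemma stepSev (k : ℕ) : LStep (Sev k) .tau (Sod k) := by
  refine LStep.parL _ _ _ _ ?_ (by simp [Act.bn])
  refine LStep.parR _ _ _ _ ?_ (by simp [Act.bn])
  exact LStep.res _ _ _ _ (stepBeo k) (by simp [Act.n, Act.fnA, Act.bn])

lemma stepSod (k : ℕ) : LStep (Sod k) .tau (Sev (k+1)) := by
  refine LStep.parL _ _ _ _ ?_ (by simp [Act.bn])
  refine LStep.comL 0 3 _ _ _ _ (stepAio k) ?_
  exact LStep.res _ _ _ _ (stepBout k) (by simp [Act.n, Act.fnA, Act.bn])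

/-- the scheduled run -/
def cseq (n : ℕ) : LProc := if n % 2 = 0 then Sev (n / 2) else Sod (n / 2)

lemma cseq_even (k : ℕ) : cseq (2 * k) = Sev k := by
  simp [cseq, Nat.mul_div_cancel_left _ (by norm_num : 0 < 2)]

lemma cseq_odd (k : ℕ) : cseq (2 * k + 1) = Sod k := by
  have h1 : (2 * k + 1) % 2 = 1 := by omega
  have h2 : (2 * k + 1) / 2 = k := by omega
  simp [cseq, h1, h2]

lemma cseq_succ (i : ℕ) : LStep (cseq i) .tau (cseq (i + 1)) := by
  rcases Nat.even_or_odd i with ⟨k, hk⟩ | ⟨k, hk⟩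
  · have hk' : i = 2 * k := by omega
    subst hk'
    rw [cseq_even, show 2 * k + 1 = 2 * k + 1 from rfl, cseq_odd]
    exact stepSev k
  · have hk' : i = 2 * k + 1 := by omega
    subst hk'
    rw [cseq_odd, show 2 * k + 1 + 1 = 2 * (k + 1) from by ring, cseq_even]
    exact stepSod k

def crun : MaxComp LTauStep (.par Ewit rho) where
  seq := cseq
  init := by
    have : cseq 0 = Sev 0 := cseq_even 0
    exact this
  succ := fun i => Or.inl (cseq_succ i)

end PiFairWitness

namespace PiFairWitness
open PiFair

/-! ### No success along the scheduled run -/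

lemma aI_noOmega {k X} (h : X.noOmega) : (aI k X).noOmega := by
  induction k generalizing X with
  | zero => exact h
  | succ k ih => exact ih (show (LProc.par .nil X).noOmega from ⟨trivial, h⟩)

lemma dI_noOmega {k X} (h : X.noOmega) : (dI k X).noOmega := by
  induction k generalizing X with
  | zero => exact h
  | succ k ih => exact ih (show (LProc.par (.par .nil .nil) X).noOmega from ⟨⟨trivial, trivial⟩, h⟩)

lemma Avar_noOmega (k : ℕ) : (Avar k).noOmega :=
  aI_noOmega (by simp [LProc.noOmega, Proc.noOmega])

lemma Beven_noOmega (k : ℕ) : (Beven k).noOmega := by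
  cases k with
  | zero => exact ⟨trivial, by simp [LProc.noOmega, Proc.noOmega]⟩
  | succ k =>
      exact ⟨trivial, dI_noOmega ⟨⟨trivial, trivial⟩, by simp [LProc.noOmega, Proc.noOmega]⟩⟩

lemma Bodd_noOmega (k : ℕ) : (Bodd k).noOmega :=
  ⟨trivial, dI_noOmega ⟨⟨trivial, trivial⟩, by simp [LProc.noOmega, Proc.noOmega]⟩⟩

lemma no_omega_par_rho {EE T} (hno : EE.noOmega) (h : LStep (.par EE rho) .omega T) :
    False := by
  cases h with
  | parL _ _ _ _ h _ => exact step_omega h hno rfl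
  | parR _ _ _ _ h _ => cases h

lemma not_success : ¬ LSuccess crun := by
  rintro ⟨i, T, hT⟩
  have hT' : LStep (cseq i) .omega T := hT
  rcases Nat.even_or_odd i with ⟨k, hk⟩ | ⟨k, hk⟩
  · have hk' : i = 2 * k := by omega
    rw [hk', cseq_even] at hT'
    exact no_omega_par_rho (EE := .par (Avar k) (.res 1 (Beven k))) ⟨Avar_noOmega k, Beven_noOmega k⟩ hT'
  · have hk' : i = 2 * k + 1 := by omega
    rw [hk', cseq_odd] at hT'
    exact no_omega_par_rho (EE := .par (Avar k) (.res 1 (Bodd k))) ⟨Avar_noOmega k, Bodd_noOmega k⟩ hT'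

/-! ### Weak fairness of the scheduled run -/

lemma no_live_dead {l μ} (h : Live l μ (.par .nil .nil)) : False := by
  cases h <;> exact no_live_nil (by assumption)

lemma live_dI {l μ k X} (h : Live l μ (dI k X)) : Live l μ X := by
  induction k generalizing X with
  | zero => exact h
  | succ k ih =>
      have h' := ih h
      cases h' with
      | parL _ _ _ _ h _ => exact absurd h no_live_dead
      | parR _ _ _ _ h _ => exact h
      | comL₁ _ _ _ _ _ _ h _ => exact absurd h no_live_dead
      | comL₂ _ _ _ _ _ _ h _ => exact absurd h no_live_dead
      | comR₁ _ _ _ _ _ _ h _ => exact absurd h no_live_dead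
      | comR₂ _ _ _ _ _ _ h _ => exact absurd h no_live_dead
      | closeL₁ _ _ _ _ _ _ h _ _ => exact absurd h no_live_dead
      | closeL₂ _ _ _ _ _ _ h _ _ => exact absurd h no_live_dead
      | closeR₁ _ _ _ _ _ _ h _ _ => exact absurd h no_live_dead
      | closeR₂ _ _ _ _ _ _ h _ _ => exact absurd h no_live_dead

lemma live_aI {l μ k X} (h : Live l μ (aI k X)) : Live l μ X := by
  induction k generalizing X with
  | zero => exact h
  | succ k ih =>
      have h' := ih h
      cases h' with
      | parL _ _ _ _ h _ => exact absurd h no_live_nil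
      | parR _ _ _ _ h _ => exact h
      | comL₁ _ _ _ _ _ _ h _ => exact absurd h no_live_nil
      | comL₂ _ _ _ _ _ _ h _ => exact absurd h no_live_nil
      | comR₁ _ _ _ _ _ _ h _ => exact absurd h no_live_nil
      | comR₂ _ _ _ _ _ _ h _ => exact absurd h no_live_nil
      | closeL₁ _ _ _ _ _ _ h _ _ => exact absurd h no_live_nil
      | closeL₂ _ _ _ _ _ _ h _ _ => exact absurd h no_live_nil
      | closeR₁ _ _ _ _ _ _ h _ _ => exact absurd h no_live_nil
      | closeR₂ _ _ _ _ _ _ h _ _ => exact absurd h no_live_nil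

lemma live_repA {l μ t} (h : Live l μ (.rep t Pa)) : ∃ z, μ = .inp 0 z := by
  cases h with
  | rep _ _ _ _ h => cases h with | input _ _ z _ => exact ⟨z, rfl⟩

lemma live_repB {l μ t} (h : Live l μ (.rep t Qb)) : ∃ z, μ = .inp 1 z := by
  cases h with
  | rep _ _ _ _ h => cases h with | input _ _ z _ => exact ⟨z, rfl⟩

lemma live_Avar {l μ k} (h : Live l μ (Avar k)) : ∃ z, μ = .inp 0 z :=
  live_repA (live_aI h)

lemma live_bbar {l μ lB} (h : Live l μ (bbar lB)) : μ = .out 1 3 := by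
  cases h; rfl

lemma live_cell {l μ lB t} (h : Live l μ (.par (.par .nil (bbar lB)) (.rep t Qb))) :
    μ = .out 1 3 ∨ (∃ z, μ = .inp 1 z) ∨ μ = .tau := by
  cases h with
  | parL _ _ _ _ h _ =>
      cases h with
      | parL _ _ _ _ h _ => exact absurd h no_live_nil
      | parR _ _ _ _ h _ => exact Or.inl (live_bbar h)
      | comL₁ _ _ _ _ _ _ h _ => exact absurd h no_live_nil
      | comL₂ _ _ _ _ _ _ h _ => exact absurd h no_live_nil
      | comR₁ _ _ _ _ _ _ h _ => exact absurd h no_live_nil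
      | comR₂ _ _ _ _ _ _ h _ => exact absurd h no_live_nil
      | closeL₁ _ _ _ _ _ _ h _ _ => exact absurd h no_live_nil
      | closeL₂ _ _ _ _ _ _ h _ _ => exact absurd h no_live_nil
      | closeR₁ _ _ _ _ _ _ h _ _ => exact absurd h no_live_nil
      | closeR₂ _ _ _ _ _ _ h _ _ => exact absurd h no_live_nil
  | parR _ _ _ _ h _ => exact Or.inr (Or.inl (live_repB h))
  | comL₁ => exact Or.inr (Or.inr rfl)
  | comL₂ => exact Or.inr (Or.inr rfl)
  | comR₁ => exact Or.inr (Or.inr rfl)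
  | comR₂ => exact Or.inr (Or.inr rfl)
  | closeL₁ => exact Or.inr (Or.inr rfl)
  | closeL₂ => exact Or.inr (Or.inr rfl)
  | closeR₁ => exact Or.inr (Or.inr rfl)
  | closeR₂ => exact Or.inr (Or.inr rfl)

lemma live_Beven {l μ k} (h : Live l μ (Beven k)) :
    μ = .out 1 3 ∨ (∃ z, μ = .inp 1 z) ∨ μ = .tau := by
  cases k with
  | zero =>
      cases h with
      | parL _ _ _ _ h _ => exact Or.inl (live_bbar h)
      | parR _ _ _ _ h _ => exact Or.inr (Or.inl (live_repB h))
      | comL₁ => exact Or.inr (Or.inr rfl)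
      | comL₂ => exact Or.inr (Or.inr rfl)
      | comR₁ => exact Or.inr (Or.inr rfl)
      | comR₂ => exact Or.inr (Or.inr rfl)
      | closeL₁ => exact Or.inr (Or.inr rfl)
      | closeL₂ => exact Or.inr (Or.inr rfl)
      | closeR₁ => exact Or.inr (Or.inr rfl)
      | closeR₂ => exact Or.inr (Or.inr rfl)
  | succ k =>
      cases h with
      | parL _ _ _ _ h _ => exact absurd h no_live_nil
      | parR _ _ _ _ h _ => exact live_cell (live_dI h)
      | comL₁ _ _ _ _ _ _ h _ => exact absurd h no_live_nil
      | comL₂ _ _ _ _ _ _ h _ => exact absurd h no_live_nil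
      | comR₁ _ _ _ _ _ _ h _ => exact absurd h no_live_nil
      | comR₂ _ _ _ _ _ _ h _ => exact absurd h no_live_nil
      | closeL₁ _ _ _ _ _ _ h _ _ => exact absurd h no_live_nil
      | closeL₂ _ _ _ _ _ _ h _ _ => exact absurd h no_live_nil
      | closeR₁ _ _ _ _ _ _ h _ _ => exact absurd h no_live_nil
      | closeR₂ _ _ _ _ _ _ h _ _ => exact absurd h no_live_nil

lemma live_resB_out {l x y k} (h : Live l (.out x y) (.res 1 (Beven k))) : False := by
  cases h with
  | res _ _ _ _ h hn =>
      rcases live_Beven h with he | ⟨z, he⟩ | he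
      · rw [he] at hn; simp [Act.n, Act.fnA, Act.bn] at hn
      · simp at he
      · simp at he

lemma live_resB_bout {l x y k} (h : Live l (.bout x y) (.res 1 (Beven k))) : False := by
  cases h with
  | res _ _ _ _ h hn =>
      rcases live_Beven h with he | ⟨z, he⟩ | he <;> simp at he
  | open_ _ _ _ _ h hxy =>
      rcases live_Beven h with he | ⟨z, he⟩ | he <;> simp_all

lemma live_EvE_out {l x y k}
    (h : Live l (.out x y) (.par (Avar k) (.res 1 (Beven k)))) : False := by
  cases h with
  | parL _ _ _ _ h _ => obtain ⟨z, he⟩ := live_Avar h; simp at he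
  | parR _ _ _ _ h _ => exact live_resB_out h

lemma live_EvE_bout {l x y k}
    (h : Live l (.bout x y) (.par (Avar k) (.res 1 (Beven k)))) : False := by
  cases h with
  | parL _ _ _ _ h _ => obtain ⟨z, he⟩ := live_Avar h; simp at he
  | parR _ _ _ _ h _ => exact live_resB_bout h

lemma tBs_len (k : ℕ) : 3 ≤ (tBs k).length := by
  induction k with
  | zero => simp [tBs]
  | succ k ih => simp [tBs]; omega

lemma lbs_len (k : ℕ) : 3 ≤ (lbs k).length := by
  cases k with
  | zero => simp [lbs]
  | succ k => have := tBs_len k; simp [lbs]; omega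

lemma mem_lab_Beven {v k} (h : v ∈ (Beven k).lab) : v = lb k ∨ v = tB k := by
  have hd : ∀ j X, (dI j X).lab = X.lab := by
    intro j X
    induction j generalizing X with
    | zero => rfl
    | succ j ih => rw [show dI (j+1) X = dI j (.par (.par .nil .nil) X) from rfl, ih]
                   simp [LProc.lab]
  cases k with
  | zero => simp [Beven, LProc.lab] at h; tauto
  | succ k =>
      simp [Beven, LProc.lab, hd] at h
      tauto

lemma l4_ne_lb (k : ℕ) : l4 ≠ lb k := by
  intro h
  have h1 := congrArg (fun l : Label => l.1.length) h
  simp at h1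
  have := lbs_len k
  omega

lemma l4_ne_tB (k : ℕ) : l4 ≠ tB k := by
  intro h
  have h1 := congrArg (fun l : Label => l.1.length) h
  simp at h1
  have := tBs_len k
  omega

lemma not_live_l4_Sev (k : ℕ) (h : Live l4 .tau (Sev k)) : False := by
  cases h with
  | parL _ _ _ _ h _ =>
      cases h with
      | parL _ _ _ _ h _ => obtain ⟨z, he⟩ := live_Avar h; simp at he
      | parR _ _ _ _ h _ =>
          cases h with
          | res _ _ _ _ h _ =>
              have := liveLab h
              rcases mem_lab_Beven this with he | he
              · exact l4_ne_lb k he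
              · exact l4_ne_tB k he
      | comL₁ _ _ _ _ _ _ _ h => exact live_resB_out h
      | comL₂ _ _ _ _ _ _ _ h => exact live_resB_out h
      | comR₁ _ _ _ _ _ _ h _ => exact absurd (live_Avar h) (by simp)
      | comR₂ _ _ _ _ _ _ h _ => exact absurd (live_Avar h) (by simp)
      | closeL₁ _ _ _ _ _ _ _ h _ => exact live_resB_bout h
      | closeL₂ _ _ _ _ _ _ _ h _ => exact live_resB_bout h
      | closeR₁ _ _ _ _ _ _ h _ _ => exact absurd (live_Avar h) (by simp)
      | closeR₂ _ _ _ _ _ _ h _ _ => exact absurd (live_Avar h) (by simp)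
  | parR _ _ _ _ h _ => cases h
  | comL₁ _ _ _ _ _ _ _ h => cases h
  | comL₂ _ _ _ _ _ _ _ h => cases h
  | comR₁ _ _ _ _ _ _ h _ => exact live_EvE_out h
  | comR₂ _ _ _ _ _ _ h _ => exact live_EvE_out h
  | closeL₁ _ _ _ _ _ _ _ h _ => cases h
  | closeL₂ _ _ _ _ _ _ _ h _ => cases h
  | closeR₁ _ _ _ _ _ _ h _ _ => exact live_EvE_bout h
  | closeR₂ _ _ _ _ _ _ h _ _ => exact live_EvE_bout h

lemma mem_lab_Sev {v k} (h : v ∈ (Sev k).lab) :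
    v = tA k ∨ v = lb k ∨ v = tB k ∨ v = l4 := by
  have ha : ∀ j X, (aI j X).lab = X.lab := by
    intro j X
    induction j generalizing X with
    | zero => rfl
    | succ j ih => rw [show aI (j+1) X = aI j (.par .nil X) from rfl, ih]
                   simp [LProc.lab]
  simp only [Sev, LProc.lab, Set.mem_union] at h
  rcases h with (h | h) | h
  · rw [show Avar k = aI k (RepA k) from rfl, ha] at h
    simp [LProc.lab] at h
    exact Or.inl h
  · rcases mem_lab_Beven h with he | he
    · exact Or.inr (Or.inl he)
    · exact Or.inr (Or.inr (Or.inl he))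
  · simp [LProc.lab] at h
    exact Or.inr (Or.inr (Or.inr h))

lemma weakfair : WeakFair crun := by
  intro v i
  obtain ⟨k0, hk0i, hk0v⟩ : ∃ k0, i ≤ k0 ∧ v.2 + 1 ≤ k0 :=
    ⟨max i (v.2 + 1), le_max_left _ _, le_max_right _ _⟩
  refine ⟨2 * k0, by omega, ?_⟩
  intro hv
  have hv' : Live v .tau (Sev k0) := by
    have := cseq_even k0
    simpa [Ll, crun, this] using hv
  rcases mem_lab_Sev (liveLab hv') with he | he | he | he
  · have : v.2 = k0 := by rw [he]
    omega
  · have : v.2 = k0 := by rw [he]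
    omega
  · have : v.2 = k0 := by rw [he]
    omega
  · exact not_live_l4_Sev _ (he ▸ hv')

lemma not_wfmust : ¬ WfMust Ewit rho := by
  intro h
  exact not_success (h crun weakfair)

end PiFairWitness

namespace PiFairWitness
open PiFair

lemma wf_Ewit : Wf Ewit := by
  refine Wf.par _ _ (Wf.rep (tA 0) Pa) (Wf.res _ _ (Wf.par _ _ ?_ (Wf.rep (tB 0) Qb) ?_)) ?_
  · exact Wf.prefOut (lb 0) 1 3 .nil
  · intro l0 h0 l1 h1
    simp [LProc.top, labelWith] at h0 h1
    subst h0; subst h1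
    exact ⟨by decide, by decide⟩
  · intro l0 h0 l1 h1
    simp [LProc.top, labelWith] at h0 h1
    subst h0
    rcases h1 with h1 | h1 <;> subst h1 <;> exact ⟨by decide, by decide⟩

lemma wf_rho : Wf rho := Wf.prefIn l4 0 3 (.omegaPre .nil)

lemma wf_pair : Wf (.par Ewit rho) := by
  refine Wf.par _ _ wf_Ewit wf_rho ?_
  intro l0 h0 l1 h1
  simp [LProc.top, labelWith] at h0 h1
  subst h1
  rcases h0 with h0 | h0 | h0 <;> subst h0 <;> exact ⟨by decide, by decide⟩

end PiFairWitness

open PiFair PiFairWitness in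
theorem sfMust_not_imp_wfMust' :
    ∃ E ρ : LProc, Wf E ∧ E.noOmega ∧ Wf ρ ∧ Wf (.par E ρ) ∧
      E.unl = Proc.par (.rep (.input 0 3 .nil))
        (.res 1 (.par (.output 1 3 .nil)
          (.rep (.input 1 3 (.par (.output 0 3 .nil) (.output 1 3 .nil)))))) ∧
      ρ.unl = Proc.input 0 3 (.omegaPre .nil) ∧
      SfMust E ρ ∧ ¬ WfMust E ρ :=
  ⟨Ewit, rho, wf_Ewit, by simp [LProc.noOmega, Proc.noOmega], wf_rho, wf_pair,
    rfl, rfl, sfmust_holds, not_wfmust⟩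
open PiFair in
/-- sfmust does not imply wfmust; witnessed by E = !a | (νb)(b̄ | !b.(ā | b̄))
    and ρ = a.ω (names a := 0, b := 1, dummy object name 3). -/
theorem sfMust_not_imp_wfMust :
    ∃ E ρ : LProc, Wf E ∧ E.noOmega ∧ Wf ρ ∧ Wf (.par E ρ) ∧
      E.unl = Proc.par (.rep (.input 0 3 .nil))
        (.res 1 (.par (.output 1 3 .nil)
          (.rep (.input 1 3 (.par (.output 0 3 .nil) (.output 1 3 .nil)))))) ∧
      ρ.unl = Proc.input 0 3 (.omegaPre .nil) ∧
      SfMust E ρ ∧ ¬ WfMust E ρ := by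
  exact sfMust_not_imp_wfMust'
end

section
/- There exist a labeled choiceless π-calculus process E ∈ 𝒫ᵉ and a labeled observer ρ ∈ 𝒪ᵉ such that E wfmust ρ holds but Unl(E) must Unl(ρ) fails. In particular this holds for E = (νb)(b̄_{v⁰₁} | !_{v⁰₂}b.b̄) | ā_{v₃} and ρ = a_{v₄}.ω. -/
namespace PiFair

abbrev P0 : Proc := .input 1 3 (.output 1 3 .nil)

abbrev A0 : LProc := .par (.output 1 3 ([false,false],1) .nil) (.rep ([false,true],1) P0)

abbrev Ewit : LProc := .par (.res 1 A0) (.output 0 3 ([true,false],1) .nil)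

abbrev rhoWit : LProc := .input 0 3 ([true,true],1) (.omegaPre .nil)

/-- Shapes of labeled terms reachable inside the restriction (νb). -/
inductive Inner : LProc → Prop
  | nil : Inner .nil
  | out : ∀ l, Inner (.output 1 3 l .nil)
  | rep : ∀ l, Inner (.rep l P0)
  | par : ∀ {A B}, Inner A → Inner B → Inner (.par A B)

lemma inner_step : ∀ {A μ A'}, Inner A → LStep A μ A' →
    (μ = .tau ∧ Inner A') ∨ (μ = .out 1 3 ∧ Inner A') ∨
    (∃ z, μ = .inp 1 z ∧ (z = 3 → Inner A')) := by
  intro A μ A' hA h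
  induction hA generalizing μ A' with
  | nil => cases h
  | out l => cases h; exact Or.inr (Or.inl ⟨rfl, Inner.nil⟩)
  | rep l =>
    cases h
    rename_i P' hs
    cases hs
    rename_i z
    refine Or.inr (Or.inr ⟨z, rfl, fun hz => ?_⟩)
    subst hz
    have hsub : (Proc.output 1 3 .nil).subst 3 3 = Proc.output 1 3 .nil := rfl
    rw [hsub]
    exact Inner.par (Inner.out _) (Inner.rep _)
  | par hA hB ihA ihB =>
    cases h with
    | parL μ E E' F h1 hbn =>
      rcases ihA h1 with ⟨rfl, h'⟩ | ⟨rfl, h'⟩ | ⟨z, rfl, h'⟩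
      · exact Or.inl ⟨rfl, Inner.par h' hB⟩
      · exact Or.inr (Or.inl ⟨rfl, Inner.par h' hB⟩)
      · exact Or.inr (Or.inr ⟨z, rfl, fun hz => Inner.par (h' hz) hB⟩)
    | parR μ E F F' h1 hbn =>
      rcases ihB h1 with ⟨rfl, h'⟩ | ⟨rfl, h'⟩ | ⟨z, rfl, h'⟩
      · exact Or.inl ⟨rfl, Inner.par hA h'⟩
      · exact Or.inr (Or.inl ⟨rfl, Inner.par hA h'⟩)
      · exact Or.inr (Or.inr ⟨z, rfl, fun hz => Inner.par hA (h' hz)⟩)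
    | comL x y E E' F F' h1 h2 =>
      rcases ihB h2 with ⟨h, _⟩ | ⟨h, hF'⟩ | ⟨z, h, _⟩
      · exact absurd h (by simp)
      · cases h
        rcases ihA h1 with ⟨h, _⟩ | ⟨h, _⟩ | ⟨z, h, hE'⟩
        · exact absurd h (by simp)
        · exact absurd h (by simp)
        · cases h
          exact Or.inl ⟨rfl, Inner.par (hE' rfl) hF'⟩
      · exact absurd h (by simp)
    | comR x y E E' F F' h1 h2 =>
      rcases ihA h1 with ⟨h, _⟩ | ⟨h, hE'⟩ | ⟨z, h, _⟩
      · exact absurd h (by simp)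
      · cases h
        rcases ihB h2 with ⟨h, _⟩ | ⟨h, _⟩ | ⟨z, h, hF'⟩
        · exact absurd h (by simp)
        · exact absurd h (by simp)
        · cases h
          exact Or.inl ⟨rfl, Inner.par hE' (hF' rfl)⟩
      · exact absurd h (by simp)
    | closeL x y E E' F F' h1 h2 hfn =>
      rcases ihB h2 with ⟨h, _⟩ | ⟨h, _⟩ | ⟨z, h, _⟩ <;> exact absurd h (by simp)
    | closeR x y E E' F F' h1 h2 hfn =>
      rcases ihA h1 with ⟨h, _⟩ | ⟨h, _⟩ | ⟨z, h, _⟩ <;> exact absurd h (by simp)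


lemma resA_no_inp {A x y Z} (hA : Inner A) (h : LStep (.res 1 A) (.inp x y) Z) : False := by
  cases h with
  | res _ _ _ _ h1 hn =>
    rcases inner_step hA h1 with ⟨h, _⟩ | ⟨h, _⟩ | ⟨z, h, _⟩
    · exact absurd h (by simp)
    · exact absurd h (by simp)
    · cases h
      exact hn (by simp [Act.n, Act.fnA])

lemma resA_no_out {A x y Z} (hA : Inner A) (h : LStep (.res 1 A) (.out x y) Z) : False := by
  cases h with
  | res _ _ _ _ h1 hn =>
    rcases inner_step hA h1 with ⟨h, _⟩ | ⟨h, _⟩ | ⟨z, h, _⟩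
    · exact absurd h (by simp)
    · cases h
      exact hn (by simp [Act.n, Act.fnA])
    · exact absurd h (by simp)

lemma resA_no_bout {A x y Z} (hA : Inner A) (h : LStep (.res 1 A) (.bout x y) Z) : False := by
  cases h with
  | open_ =>
    rename_i hne hstep
    rcases inner_step hA hstep with ⟨h, _⟩ | ⟨h, _⟩ | ⟨z, h, _⟩
    · exact absurd h (by simp)
    · simp at h
    · exact absurd h (by simp)
  | res _ _ _ _ h1 hn =>
    rcases inner_step hA h1 with ⟨h, _⟩ | ⟨h, _⟩ | ⟨z, h, _⟩ <;> exact absurd h (by simp)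

lemma res_tau {A Z} (hA : Inner A) (h : LStep (.res 1 A) .tau Z) :
    ∃ A', Inner A' ∧ Z = .res 1 A' := by
  cases h with
  | res _ _ _ _ h1 _ =>
    rcases inner_step hA h1 with ⟨_, h'⟩ | ⟨h, _⟩ | ⟨z, h, _⟩
    · exact ⟨_, h', rfl⟩
    · exact absurd h (by simp)
    · exact absurd h (by simp)

lemma pre_step {A S'} (hA : Inner A)
    (h : LStep (.par (.par (.res 1 A) (.output 0 3 ([true,false],1) .nil)) rhoWit) .tau S') :
    (∃ A', Inner A' ∧ S' = .par (.par (.res 1 A') (.output 0 3 ([true,false],1) .nil)) rhoWit) ∨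
    (∃ T, LStep S' .omega T) := by
  cases h with
  | parL _ _ _ _ h1 _ =>
    cases h1 with
    | parL _ _ _ _ h2 _ =>
      obtain ⟨A', hA', rfl⟩ := res_tau hA h2
      exact Or.inl ⟨A', hA', rfl⟩
    | parR _ _ _ _ h2 _ => cases h2
    | comL _ _ _ _ _ _ h2 h3 => exact absurd h2 (fun h2 => resA_no_inp hA h2)
    | comR _ _ _ _ _ _ h2 h3 => exact absurd h2 (fun h2 => resA_no_out hA h2)
    | closeL _ _ _ _ _ _ h2 h3 _ => cases h3
    | closeR _ _ _ _ _ _ h2 h3 _ => exact absurd h2 (fun h2 => resA_no_bout hA h2)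
  | parR _ _ _ _ h1 _ => cases h1
  | comL _ _ _ _ _ _ h1 h2 => cases h2
  | comR x y _ _ _ _ h1 h2 =>
    cases h1 with
    | parL _ _ _ _ h3 _ => exact absurd h3 (fun h3 => resA_no_out hA h3)
    | parR _ _ _ _ h3 _ =>
      cases h3
      cases h2
      refine Or.inr ⟨_, LStep.parR .omega _ _ _ (LStep.omega_ .nil) ?_⟩
      intro w hw
      simp [Act.bn] at hw
  | closeL _ _ _ _ _ _ h1 h2 _ => cases h2
  | closeR _ _ _ _ _ _ h1 h2 _ =>
    cases h1 with
    | parL _ _ _ _ h3 _ => exact absurd h3 (fun h3 => resA_no_bout hA h3)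
    | parR _ _ _ _ h3 _ => cases h3


/-- In any pre-communication state, the label of ā is live for τ. -/
lemma pre_live {A : LProc} :
    Live ([true,false],1) .tau
      (.par (.par (.res 1 A) (.output 0 3 ([true,false],1) .nil)) rhoWit) := by
  refine Live.comR₁ _ ([true,true],1) 0 3 _ _ ?_ ?_
  · refine Live.parR _ _ _ _ (Live.output _ 0 3 _) ?_
    intro w hw
    simp [Act.bn] at hw
  · exact Live.input _ 0 3 3 _

lemma wfmust_holds : WfMust Ewit rhoWit := by
  intro c hfair
  have key : ∀ i : ℕ, (∃ k, ∃ T, LStep (c.seq k) .omega T) ∨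
      (∃ A, Inner A ∧ c.seq i =
        .par (.par (.res 1 A) (.output 0 3 ([true,false],1) .nil)) rhoWit) := by
    intro i
    induction i with
    | zero =>
      right
      exact ⟨A0, Inner.par (Inner.out _) (Inner.rep _), by rw [c.init]⟩
    | succ i ih =>
      rcases ih with h | ⟨A, hA, heq⟩
      · exact Or.inl h
      · rcases c.succ i with hstep | ⟨_, heq'⟩
        · rw [heq] at hstep
          rcases pre_step hA hstep with ⟨A', hA', h'⟩ | ⟨T, hT⟩
          · exact Or.inr ⟨A', hA', h'⟩
          · exact Or.inl ⟨i + 1, T, hT⟩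
        · exact Or.inr ⟨A, hA, heq' ▸ heq⟩
  obtain ⟨j, _, hv⟩ := hfair ([true,false],1) 0
  rcases key j with ⟨k, T, hT⟩ | ⟨A, hA, heq⟩
  · exact ⟨k, T, hT⟩
  · exact absurd (by rw [heq]; exact pre_live) hv

/-- Unlabeled inner states of the diverging computation. -/
def U : ℕ → Proc
  | 0 => .par (.output 1 3 .nil) (.rep P0)
  | n+1 => .par .nil (U n)

lemma U_step (n : ℕ) : Step (U n) .tau (U (n+1)) := by
  induction n with
  | zero =>
    refine Step.comR 1 3 _ _ _ _ (Step.output 1 3 .nil) ?_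
    have h := Step.rep (.inp 1 3) P0 _ (Step.input 1 3 3 (.output 1 3 .nil))
    exact h
  | succ n ih =>
    refine Step.parR .tau _ _ _ ih ?_
    intro w hw
    simp [Act.bn] at hw

lemma U_noOmega (n : ℕ) : (U n).noOmega := by
  induction n with
  | zero => exact ⟨trivial, trivial⟩
  | succ n ih => exact ⟨trivial, ih⟩

lemma step_not_omega : ∀ {P μ T}, Step P μ T → P.noOmega → μ ≠ .omega := by
  intro P μ T h
  induction h with
  | input => intro _ h; exact Act.noConfusion h
  | output => intro _ h; exact Act.noConfusion h
  | open_ => intro _ h; exact Act.noConfusion h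
  | res _ _ _ _ _ _ ih => intro hP; exact ih hP
  | parL _ _ _ _ _ _ ih => intro hP; exact ih hP.1
  | parR _ _ _ _ _ _ ih => intro hP; exact ih hP.2
  | comL => intro _ h; exact Act.noConfusion h
  | comR => intro _ h; exact Act.noConfusion h
  | closeL => intro _ h; exact Act.noConfusion h
  | closeR => intro _ h; exact Act.noConfusion h
  | rep _ _ _ _ ih => intro hP; exact ih hP
  | omega_ => intro hP; exact absurd hP (fun h => h)

def badComp : MaxComp TauStep (.par Ewit.unl rhoWit.unl) :=
  { seq := fun n => .par (.par (.res 1 (U n)) (.output 0 3 .nil)) (.input 0 3 (.omegaPre .nil))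
    init := rfl
    succ := by
      intro i
      left
      refine Step.parL .tau _ _ _ (Step.parL .tau _ _ _ (Step.res 1 .tau _ _ (U_step i) ?_) ?_) ?_
      · simp [Act.n, Act.fnA, Act.bn]
      · intro w hw; simp [Act.bn] at hw
      · intro w hw; simp [Act.bn] at hw }

lemma not_must : ¬ Must Ewit.unl rhoWit.unl := by
  intro hm
  obtain ⟨i, T, h0⟩ := hm badComp
  have h : Step (.par (.par (.res 1 (U i)) (.output 0 3 .nil))
      (.input 0 3 (.omegaPre .nil))) .omega T := h0
  cases h with
  | parL _ _ _ _ h1 _ =>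
    cases h1 with
    | parL _ _ _ _ h2 _ =>
      cases h2 with
      | res _ _ _ _ h3 _ => exact step_not_omega h3 (U_noOmega i) rfl
    | parR _ _ _ _ h2 _ => cases h2
  | parR _ _ _ _ h1 _ => cases h1


lemma labrel_singletons (a b : Label)
    (h1 : ¬ a.1 <+: b.1) (h2 : ¬ b.1 <+: a.1) :
    LabRel ({a} : Set Label) ({b} : Set Label) := by
  intro l0 h0 l1 hb
  simp only [Set.mem_singleton_iff] at h0 hb
  subst h0; subst hb
  exact ⟨h1, h2⟩

lemma wf_Ewit : Wf Ewit := by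
  refine Wf.par _ _ (Wf.res 1 _ (Wf.par _ _ ?_ (Wf.rep _ _) ?_)) ?_ ?_
  · exact Wf.prefOut ([false,false],1) 1 3 .nil
  · exact labrel_singletons _ _ (by decide) (by decide)
  · exact Wf.prefOut ([true,false],1) 0 3 .nil
  · intro l0 h0 l1 h1
    simp only [LProc.top, Set.mem_union, Set.mem_singleton_iff] at h0 h1
    subst h1
    rcases h0 with h0 | h0 <;> subst h0 <;> exact ⟨by decide, by decide⟩

lemma wf_rho : Wf rhoWit := Wf.prefIn ([true,true],1) 0 3 (.omegaPre .nil)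

lemma wf_par : Wf (.par Ewit rhoWit) := by
  refine Wf.par _ _ wf_Ewit wf_rho ?_
  intro l0 h0 l1 h1
  simp only [LProc.top, Set.mem_union, Set.mem_singleton_iff] at h0 h1
  subst h1
  rcases h0 with (h0 | h0) | h0 <;> subst h0 <;> exact ⟨by decide, by decide⟩

end PiFair

open PiFair in
/-- wfmust does not imply must; witnessed by E = (νb)(b̄ | !b.b̄) | ā and
    ρ = a.ω (names a := 0, b := 1, dummy object name 3). -/
theorem wfMust_not_imp_must :
    ∃ E ρ : LProc, Wf E ∧ E.noOmega ∧ Wf ρ ∧ Wf (.par E ρ) ∧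
      E.unl = Proc.par
        (.res 1 (.par (.output 1 3 .nil) (.rep (.input 1 3 (.output 1 3 .nil)))))
        (.output 0 3 .nil) ∧
      ρ.unl = Proc.input 0 3 (.omegaPre .nil) ∧
      WfMust E ρ ∧ ¬ Must E.unl ρ.unl := by
  exact ⟨Ewit, rhoWit, wf_Ewit, ⟨⟨trivial, trivial⟩, trivial⟩, wf_rho, wf_par, rfl, rfl,
    wfmust_holds, not_must⟩
end

section
/- There exist a labeled choiceless π-calculus process E ∈ 𝒫ᵉ and a labeled observer ρ ∈ 𝒪ᵉ such that Unl(E) fair Unl(ρ) holds but E sfmust ρ fails. In particular this holds for E = c̄_{v⁰₁} | !_{v⁰₂}c.((νb)(b̄ | b.c̄ | b.ā)) and ρ = a_{v₃}.ω. -/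
namespace PiFair
namespace Ex

def Bd : Proc := .res 1 (.par (.output 1 3 .nil)
  (.par (.input 1 3 (.output 2 3 .nil)) (.input 1 3 (.output 0 3 .nil))))
def R : Proc := .input 2 3 Bd
def Cu : Proc := .output 2 3 .nil
def B1 : Proc := .res 1 (.par .nil (.par (.output 2 3 .nil) (.input 1 3 (.output 0 3 .nil))))
def B2 : Proc := .res 1 (.par .nil (.par (.input 1 3 (.output 2 3 .nil)) (.output 0 3 .nil)))
def B1' : Proc := .res 1 (.par .nil (.par .nil (.input 1 3 (.output 0 3 .nil))))
def B2' : Proc := .res 1 (.par .nil (.par (.input 1 3 (.output 2 3 .nil)) .nil))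
def rhoU : Proc := .input 0 3 (.omegaPre .nil)
def W : Proc := .omegaPre .nil

def isTok (t : Proc) : Prop :=
  t = .nil ∨ t = Cu ∨ t = Bd ∨ t = B1 ∨ t = B2 ∨ t = B1' ∨ t = B2'
def isLive (t : Proc) : Prop := t = Cu ∨ t = Bd ∨ t = B1 ∨ t = B2
def combU (ts : List Proc) : Proc := ts.foldr .par (.rep R)

lemma subst_Bd : Bd.subst 3 3 = Bd := by decide

lemma bd_step {μ t'} (hs : Step Bd μ t') : μ = .tau ∧ (t' = B1 ∨ t' = B2) := by
  unfold Bd at hs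
  aesop (add safe cases Step) (add simp [Act.n, Act.fnA, Act.bn, Proc.subst, B1, B2])

lemma b1_step {μ t'} (hs : Step B1 μ t') : μ = .out 2 3 ∧ t' = B1' := by
  unfold B1 at hs
  aesop (add safe cases Step) (add simp [Act.n, Act.fnA, Act.bn, Proc.subst, B1'])

lemma b2_step {μ t'} (hs : Step B2 μ t') : μ = .out 0 3 ∧ t' = B2' := by
  unfold B2 at hs
  aesop (add safe cases Step) (add simp [Act.n, Act.fnA, Act.bn, Proc.subst, B2'])

lemma b1'_step {μ t'} (hs : Step B1' μ t') : False := by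
  unfold B1' at hs
  aesop (add safe cases Step) (add simp [Act.n, Act.fnA, Act.bn])

lemma b2'_step {μ t'} (hs : Step B2' μ t') : False := by
  unfold B2' at hs
  aesop (add safe cases Step) (add simp [Act.n, Act.fnA, Act.bn])

lemma tok_step {t : Proc} (ht : isTok t) {μ t'} (hs : Step t μ t') :
    (t = Cu ∧ μ = .out 2 3 ∧ t' = .nil) ∨
    (t = Bd ∧ μ = .tau ∧ (t' = B1 ∨ t' = B2)) ∨
    (t = B1 ∧ μ = .out 2 3 ∧ t' = B1') ∨
    (t = B2 ∧ μ = .out 0 3 ∧ t' = B2') := by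
  rcases ht with h|h|h|h|h|h|h <;> subst h
  · cases hs
  · cases hs; exact Or.inl ⟨rfl, rfl, rfl⟩
  · exact Or.inr (Or.inl ⟨rfl, (bd_step hs).1, (bd_step hs).2⟩)
  · exact Or.inr (Or.inr (Or.inl ⟨rfl, (b1_step hs).1, (b1_step hs).2⟩))
  · exact Or.inr (Or.inr (Or.inr ⟨rfl, (b2_step hs).1, (b2_step hs).2⟩))
  · exact absurd hs (fun h => b1'_step h)
  · exact absurd hs (fun h => b2'_step h)

end Ex
end PiFair
namespace PiFair
namespace Ex

lemma combU_inp (ts : List Proc) : Step (combU ts) (.inp 2 3) (combU (ts ++ [Bd])) := by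
  induction ts with
  | nil =>
      have h := Step.rep (.inp 2 3) R (Bd.subst 3 3) (Step.input 2 3 3 Bd)
      simpa [combU, subst_Bd] using h
  | cons t ts ih =>
      exact Step.parR _ _ _ _ ih (by simp [Act.bn])

lemma rep_inp {μ X} (h : Step (.rep R) μ X) :
    ∃ z, μ = .inp 2 z ∧ X = .par (Bd.subst 3 z) (.rep R) := by
  cases h with
  | rep _ _ _ h => cases h; exact ⟨_, rfl, rfl⟩

lemma comb_char : ∀ ts : List Proc, (∀ t ∈ ts, isTok t) → ∀ {μ X}, Step (combU ts) μ X →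
    (μ = .tau ∧ ∃ ts', X = combU ts' ∧ (∀ t ∈ ts', isTok t) ∧ ∃ t ∈ ts', isLive t) ∨
    (μ = .out 2 3 ∧ ∃ ts', X = combU ts' ∧ (∀ t ∈ ts', isTok t)) ∨
    (μ = .out 0 3 ∧ ∃ ts', X = combU ts' ∧ (∀ t ∈ ts', isTok t)) ∨
    (∃ z, μ = .inp 2 z ∧ X = combU (ts ++ [Bd.subst 3 z])) := by
  intro ts
  induction ts with
  | nil =>
      intro _ μ X h
      obtain ⟨z, rfl, rfl⟩ := rep_inp h
      exact Or.inr (Or.inr (Or.inr ⟨z, rfl, rfl⟩))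
  | cons t ts ih =>
      intro htok μ X h
      have htt : isTok t := htok t (by simp)
      have hts : ∀ u ∈ ts, isTok u := fun u hu => htok u (by simp [hu])
      cases h with
      | parL _ _ _ _ h hbn =>
          rcases tok_step htt h with ⟨rfl, rfl, rfl⟩ | ⟨rfl, rfl, h'⟩ | ⟨rfl, rfl, rfl⟩ | ⟨rfl, rfl, rfl⟩
          · exact Or.inr (Or.inl ⟨rfl, .nil :: ts, rfl, by
              intro u hu; rcases List.mem_cons.1 hu with rfl | hu
              · exact Or.inl rfl
              · exact hts u hu⟩)
          · rcases h' with rfl | rfl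
            · refine Or.inl ⟨rfl, B1 :: ts, rfl, ?_, ⟨B1, by simp, Or.inr (Or.inr (Or.inl rfl))⟩⟩
              intro u hu; rcases List.mem_cons.1 hu with rfl | hu
              · exact Or.inr (Or.inr (Or.inr (Or.inl rfl)))
              · exact hts u hu
            · refine Or.inl ⟨rfl, B2 :: ts, rfl, ?_, ⟨B2, by simp, Or.inr (Or.inr (Or.inr rfl))⟩⟩
              intro u hu; rcases List.mem_cons.1 hu with rfl | hu
              · exact Or.inr (Or.inr (Or.inr (Or.inr (Or.inl rfl))))
              · exact hts u hu
          · exact Or.inr (Or.inl ⟨rfl, B1' :: ts, rfl, by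
              intro u hu; rcases List.mem_cons.1 hu with rfl | hu
              · exact Or.inr (Or.inr (Or.inr (Or.inr (Or.inr (Or.inl rfl)))))
              · exact hts u hu⟩)
          · exact Or.inr (Or.inr (Or.inl ⟨rfl, B2' :: ts, rfl, by
              intro u hu; rcases List.mem_cons.1 hu with rfl | hu
              · exact Or.inr (Or.inr (Or.inr (Or.inr (Or.inr (Or.inr rfl)))))
              · exact hts u hu⟩))
      | parR _ _ _ _ h hbn =>
          rcases ih hts h with ⟨rfl, ts', rfl, h1, h2⟩ | ⟨rfl, ts', rfl, h1⟩ | ⟨rfl, ts', rfl, h1⟩ | ⟨z, rfl, rfl⟩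
          · refine Or.inl ⟨rfl, t :: ts', rfl, ?_, ?_⟩
            · intro u hu; rcases List.mem_cons.1 hu with rfl | hu
              · exact htt
              · exact h1 u hu
            · obtain ⟨u, hu, hl⟩ := h2; exact ⟨u, by simp [hu], hl⟩
          · refine Or.inr (Or.inl ⟨rfl, t :: ts', rfl, ?_⟩)
            intro u hu; rcases List.mem_cons.1 hu with rfl | hu
            · exact htt
            · exact h1 u hu
          · refine Or.inr (Or.inr (Or.inl ⟨rfl, t :: ts', rfl, ?_⟩))
            intro u hu; rcases List.mem_cons.1 hu with rfl | hu
            · exact htt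
            · exact h1 u hu
          · exact Or.inr (Or.inr (Or.inr ⟨z, rfl, by simp [combU]⟩))
      | comL x y _ P' _ Q' h1 h2 =>
          rcases tok_step htt h1 with ⟨_, h, _⟩ | ⟨_, h, _⟩ | ⟨_, h, _⟩ | ⟨_, h, _⟩ <;> simp at h
      | comR x y _ P' _ Q' h1 h2 =>
          rcases ih hts h2 with ⟨h, _⟩ | ⟨h, _⟩ | ⟨h, _⟩ | ⟨z, h, rfl⟩
          · simp at h
          · simp at h
          · simp at h
          · obtain ⟨rfl, rfl⟩ : x = 2 ∧ y = z := by simpa using h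
            rcases tok_step htt h1 with ⟨rfl, ho, rfl⟩ | ⟨_, ho, _⟩ | ⟨rfl, ho, rfl⟩ | ⟨_, ho, _⟩
            · have hy : y = 3 := by simpa using ho
              subst hy
              refine Or.inl ⟨rfl, .nil :: (ts ++ [Bd]), by simp [combU, subst_Bd], ?_, ⟨Bd, by simp, Or.inr (Or.inl rfl)⟩⟩
              intro u hu
              rcases List.mem_cons.1 hu with rfl | hu
              · exact Or.inl rfl
              rcases List.mem_append.1 hu with hu | hu
              · exact hts u hu
              · simp at hu; subst hu; exact Or.inr (Or.inr (Or.inl rfl))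
            · simp at ho
            · have hy : y = 3 := by simpa using ho
              subst hy
              refine Or.inl ⟨rfl, B1' :: (ts ++ [Bd]), by simp [combU, subst_Bd], ?_, ⟨Bd, by simp, Or.inr (Or.inl rfl)⟩⟩
              intro u hu
              rcases List.mem_cons.1 hu with rfl | hu
              · exact Or.inr (Or.inr (Or.inr (Or.inr (Or.inr (Or.inl rfl)))))
              rcases List.mem_append.1 hu with hu | hu
              · exact hts u hu
              · simp at hu; subst hu; exact Or.inr (Or.inr (Or.inl rfl))
            · simp at ho
      | closeL x y _ P' _ Q' h1 h2 h3 =>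
          rcases tok_step htt h1 with ⟨_, h, _⟩ | ⟨_, h, _⟩ | ⟨_, h, _⟩ | ⟨_, h, _⟩ <;> simp at h
      | closeR x y _ P' _ Q' h1 h2 h3 =>
          rcases tok_step htt h1 with ⟨_, h, _⟩ | ⟨_, h, _⟩ | ⟨_, h, _⟩ | ⟨_, h, _⟩ <;> simp at h

end Ex
end PiFair
namespace PiFair
namespace Ex

def Inv (T : Proc) : Prop := ∃ ts o, T = .par (combU ts) o ∧ (∀ t ∈ ts, isTok t) ∧
  (o = rhoU ∨ o = W) ∧ (o = rhoU → ∃ t ∈ ts, isLive t)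

lemma rho_inp {μ X} (h : Step rhoU μ X) : ∃ z, μ = .inp 0 z ∧ X = W := by
  cases h; exact ⟨_, rfl, rfl⟩

lemma inv_pres {T T'} (h : Inv T) (hs : TauStep T T') : Inv T' := by
  obtain ⟨ts, o, rfl, htok, ho, hlive⟩ := h
  cases hs with
  | parL _ _ _ _ h _ =>
      rcases comb_char ts htok h with ⟨_, ts', rfl, h1, h2⟩ | ⟨h, _⟩ | ⟨h, _⟩ | ⟨z, h, _⟩
      · exact ⟨ts', o, rfl, h1, ho, fun _ => h2⟩
      all_goals simp at h
  | parR _ _ _ _ h _ =>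
      rcases ho with rfl | rfl
      · obtain ⟨z, h', _⟩ := rho_inp h; simp at h'
      · cases h
  | comL x y _ _ _ _ h1 h2 =>
      rcases ho with rfl | rfl <;> cases h2
  | comR x y _ X _ o' h1 h2 =>
      rcases ho with rfl | rfl
      · obtain ⟨z, hz, rfl⟩ := rho_inp h2
        obtain ⟨rfl, rfl⟩ : x = 0 ∧ y = z := by simpa using hz
        rcases comb_char ts htok h1 with ⟨h, _⟩ | ⟨h, _⟩ | ⟨_, ts', rfl, h3⟩ | ⟨z', h, _⟩
        · simp at h
        · simp at h
        · exact ⟨ts', W, rfl, h3, Or.inr rfl, fun hW => absurd hW (by simp [W, rhoU])⟩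
        · simp at h
      · cases h2
  | closeL x y _ _ _ _ h1 h2 h3 =>
      rcases ho with rfl | rfl <;> cases h2
  | closeR x y _ _ _ _ h1 h2 h3 =>
      rcases comb_char ts htok h1 with ⟨h, _⟩ | ⟨h, _⟩ | ⟨h, _⟩ | ⟨z, h, _⟩ <;> simp at h

lemma lift_step {t t' : Proc} {μ} (hbn : μ.bn = ∅) :
    ∀ ts : List Proc, t ∈ ts → Step t μ t' →
    ∃ ts', Step (combU ts) μ (combU ts') ∧ t' ∈ ts' := by
  intro ts
  induction ts with
  | nil => intro h; simp at h
  | cons u ts ih =>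
      intro hm hs
      rcases List.mem_cons.1 hm with rfl | hm
      · exact ⟨t' :: ts, Step.parL _ _ _ _ hs (by simp [hbn]), by simp⟩
      · obtain ⟨ts', h1, h2⟩ := ih hm hs
        exact ⟨u :: ts', Step.parR _ _ _ _ h1 (by simp [hbn]), by simp [h2]⟩

lemma lift_com {t t' : Proc} : ∀ ts, t ∈ ts → Step t (.out 2 3) t' →
    ∃ ts', Step (combU ts) .tau (combU ts') ∧ Bd ∈ ts' := by
  intro ts
  induction ts with
  | nil => intro h; simp at h
  | cons u ts ih =>
      intro hm hs
      rcases List.mem_cons.1 hm with rfl | hm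
      · exact ⟨t' :: (ts ++ [Bd]), Step.comR 2 3 _ _ _ _ hs (combU_inp ts), by simp⟩
      · obtain ⟨ts', h1, h2⟩ := ih hm hs
        exact ⟨u :: ts', Step.parR _ _ _ _ h1 (by simp [Act.bn]), by simp [h2]⟩

lemma step_Bd_B2 : Step Bd .tau B2 := by
  refine Step.res _ _ _ _ (Step.comR 1 3 _ _ _ _ (Step.output 1 3 .nil)
    (Step.parR _ _ _ _ (Step.input 1 3 3 (.output 0 3 .nil)) (by simp [Act.bn])))
    (by simp [Act.n, Act.fnA, Act.bn])

lemma step_B2 : Step B2 (.out 0 3) B2' := by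
  refine Step.res _ _ _ _ (Step.parR _ _ _ _ (Step.parR _ _ _ _ (Step.output 0 3 .nil)
    (by simp [Act.bn])) (by simp [Act.bn])) (by simp [Act.n, Act.fnA, Act.bn])

lemma step_B1 : Step B1 (.out 2 3) B1' := by
  refine Step.res _ _ _ _ (Step.parR _ _ _ _ (Step.parL _ _ _ _ (Step.output 2 3 .nil)
    (by simp [Act.bn])) (by simp [Act.bn])) (by simp [Act.n, Act.fnA, Act.bn])

lemma step_rho : Step rhoU (.inp 0 3) W := Step.input 0 3 3 (.omegaPre .nil)

lemma reach_W (ts : List Proc) : ∃ T'', Step (.par (combU ts) W) .omega T'' :=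
  ⟨_, Step.parR _ _ _ _ (Step.omega_ .nil) (by simp [Act.bn])⟩

lemma reach_from_B2 {ts} (h : B2 ∈ ts) :
    ∃ T' T'', TauStar (.par (combU ts) rhoU) T' ∧ Step T' .omega T'' := by
  obtain ⟨ts', h1, _⟩ := lift_step (μ := .out 0 3) rfl ts h step_B2
  obtain ⟨T'', hT⟩ := reach_W ts'
  exact ⟨_, T'', Relation.ReflTransGen.head (Step.comR 0 3 _ _ _ _ h1 step_rho)
    Relation.ReflTransGen.refl, hT⟩

lemma reach_from_Bd {ts} (h : Bd ∈ ts) :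
    ∃ T' T'', TauStar (.par (combU ts) rhoU) T' ∧ Step T' .omega T'' := by
  obtain ⟨ts', h1, h2⟩ := lift_step (μ := .tau) rfl ts h step_Bd_B2
  obtain ⟨T', T'', hs, hT⟩ := reach_from_B2 h2
  exact ⟨T', T'', Relation.ReflTransGen.head (Step.parL _ _ _ _ h1 (by simp [Act.bn])) hs, hT⟩

lemma reach_from_out {ts t t'} (h : t ∈ ts) (hs : Step t (.out 2 3) t') :
    ∃ T' T'', TauStar (.par (combU ts) rhoU) T' ∧ Step T' .omega T'' := by
  obtain ⟨ts', h1, h2⟩ := lift_com ts h hs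
  obtain ⟨T', T'', hst, hT⟩ := reach_from_Bd h2
  exact ⟨T', T'', Relation.ReflTransGen.head (Step.parL _ _ _ _ h1 (by simp [Act.bn])) hst, hT⟩

lemma inv_reach (ts : List Proc) (o : Proc) (ho : o = rhoU ∨ o = W)
    (hlive : o = rhoU → ∃ t ∈ ts, isLive t) :
    ∃ T' T'', TauStar (.par (combU ts) o) T' ∧ Step T' .omega T'' := by
  rcases ho with rfl | rfl
  · obtain ⟨t, hm, hl⟩ := hlive rfl
    rcases hl with rfl | rfl | rfl | rfl
    · exact reach_from_out hm (Step.output 2 3 .nil)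
    · exact reach_from_Bd hm
    · exact reach_from_out hm step_B1
    · exact reach_from_B2 hm
  · obtain ⟨T'', hT⟩ := reach_W ts
    exact ⟨_, T'', Relation.ReflTransGen.refl, hT⟩

theorem fairU : FairT (.par Cu (.rep R)) rhoU := by
  intro c i
  have hInv : ∀ j, Inv (c.seq j) := by
    intro j
    induction j with
    | zero =>
        rw [c.init]
        refine ⟨[Cu], rhoU, rfl, ?_, Or.inl rfl, fun _ => ⟨Cu, by simp, Or.inl rfl⟩⟩
        intro t ht; simp at ht; subst ht; exact Or.inr (Or.inl rfl)
    | succ j ih =>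
        rcases c.succ j with h | ⟨_, h⟩
        · exact inv_pres ih h
        · rwa [h]
  obtain ⟨ts, o, hT, htok, ho, hlive⟩ := hInv i
  rw [hT]
  exact inv_reach ts o ho hlive

end Ex
end PiFair
namespace PiFair
namespace Ex

/-! ### Labeled pieces -/

def lC : Label := ([false, false], 0)
def sL (k : ℕ) : List Bool := [false, true] ++ List.replicate k true
def tL (k : ℕ) : List Bool := sL k ++ [false]
def RepL (k : ℕ) : LProc := .rep (sL k, k) R
def C0 : LProc := .output 2 3 lC .nil
def EL : LProc := .par C0 (RepL 0)
def rhoL : LProc := .input 0 3 ([true], 0) (.omegaPre .nil)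
def IAL (k : ℕ) : LProc :=
  .input 1 3 (tL k ++ [true, true], k + 1) (.output 0 3 (tL k ++ [true, true], k + 2) .nil)
def LB0 (k : ℕ) : LProc :=
  .res 1 (.par (.output 1 3 (tL k ++ [false], k + 1) .nil)
    (.par (.input 1 3 (tL k ++ [true, false], k + 1)
      (.output 2 3 (tL k ++ [true, false], k + 2) .nil)) (IAL k)))
def LB1 (k : ℕ) : LProc :=
  .res 1 (.par .nil (.par (.output 2 3 (tL k ++ [true, false], k + 2) .nil) (IAL k)))
def LB1' (k : ℕ) : LProc := .res 1 (.par .nil (.par .nil (IAL k)))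
def deads (k : ℕ) : List LProc := (List.range k).map LB1'
def combL (ts : List LProc) (Z : LProc) : LProc := ts.foldr .par Z
def EPt (X : LProc) (k : ℕ) : LProc := combL (.nil :: deads k) (.par X (RepL (k + 1)))

def seqF : ℕ → LProc
  | 0 => .par EL rhoL
  | (j + 1) => .par (EPt (if j % 2 = 0 then LB0 (j / 2) else LB1 (j / 2)) (j / 2)) rhoL

lemma LB0_eq (k : ℕ) : labelWith (sL k ++ [false], k + 1) Bd = LB0 k := by
  simp [labelWith, Bd, LB0, IAL, tL, List.append_assoc]

lemma sL_succ (k : ℕ) : sL k ++ [true] = sL (k + 1) := by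
  simp [sL, List.replicate_succ']

lemma rep_unfold (k : ℕ) :
    LStep (RepL k) (.inp 2 3) (.par (LB0 k) (RepL (k + 1))) := by
  have h := LStep.rep (.inp 2 3) (sL k, k) R (Bd.subst 3 3) (Step.input 2 3 3 Bd)
  rw [subst_Bd] at h
  simpa [RepL, sL_succ, LB0_eq] using h

lemma combL_snoc (ts : List LProc) (t Z : LProc) :
    combL ts (.par t Z) = combL (ts ++ [t]) Z := by
  simp [combL, List.foldr_append]

lemma lift_tauL {X X'} (h : LStep X .tau X') :
    ∀ (ts : List LProc), LStep (combL ts X) .tau (combL ts X') := by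
  intro ts
  induction ts with
  | nil => exact h
  | cons u ts ih => exact LStep.parR _ _ _ _ ih (by simp [Act.bn])

lemma step0 : LStep (seqF 0) .tau (seqF 1) := by
  refine LStep.parL _ _ _ _ ?_ (by simp [Act.bn])
  show LStep (.par C0 (RepL 0)) .tau (.par .nil (.par (LB0 0) (RepL 1)))
  exact LStep.comR 2 3 _ _ _ _ (LStep.output 2 3 lC .nil) (rep_unfold 0)

lemma stepA (k : ℕ) : LStep (.par (EPt (LB0 k) k) rhoL) .tau (.par (EPt (LB1 k) k) rhoL) := by
  refine LStep.parL _ _ _ _ ?_ (by simp [Act.bn])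
  refine lift_tauL ?_ _
  refine LStep.parL _ _ _ _ ?_ (by simp [Act.bn])
  show LStep (LB0 k) .tau (LB1 k)
  refine LStep.res _ _ _ _ ?_ (by simp [Act.n, Act.fnA, Act.bn])
  exact LStep.comR 1 3 _ _ _ _ (LStep.output 1 3 _ .nil)
    (LStep.parL _ _ _ _ (LStep.input 1 3 3 _ _) (by simp [Act.bn]))

lemma deads_succ (k : ℕ) : deads (k + 1) = deads k ++ [LB1' k] := by
  simp [deads, List.range_succ]

lemma stepB (k : ℕ) :
    LStep (.par (EPt (LB1 k) k) rhoL) .tau (.par (EPt (LB0 (k + 1)) (k + 1)) rhoL) := by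
  refine LStep.parL _ _ _ _ ?_ (by simp [Act.bn])
  have core : LStep (.par (LB1 k) (RepL (k + 1))) .tau
      (.par (LB1' k) (.par (LB0 (k + 1)) (RepL (k + 2)))) := by
    refine LStep.comR 2 3 _ _ _ _ ?_ (rep_unfold (k + 1))
    refine LStep.res _ _ _ _ ?_ (by simp [Act.n, Act.fnA, Act.bn])
    exact LStep.parR _ _ _ _ (LStep.parL _ _ _ _ (LStep.output 2 3 _ .nil)
      (by simp [Act.bn])) (by simp [Act.bn])
  have h := lift_tauL core (.nil :: deads k)
  show LStep (EPt (LB1 k) k) .tau (EPt (LB0 (k + 1)) (k + 1))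
  unfold EPt
  rw [deads_succ, show LProc.nil :: (deads k ++ [LB1' k]) = (LProc.nil :: deads k) ++ [LB1' k] by simp,
    ← combL_snoc]
  exact h

lemma succ_all (i : ℕ) : LTauStep (seqF i) (seqF (i + 1)) := by
  cases i with
  | zero => exact step0
  | succ j =>
      by_cases h : j % 2 = 0
      · have h1 : (j + 1) % 2 = 1 := by omega
        have h2 : (j + 1) / 2 = j / 2 := by omega
        simpa [seqF, h, h1, h2, LTauStep] using stepA (j / 2)
      · have h0 : j % 2 = 1 := by omega
        have h1 : (j + 1) % 2 = 0 := by omega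
        have h2 : (j + 1) / 2 = j / 2 + 1 := by omega
        simpa [seqF, h0, h1, h2, LTauStep] using stepB (j / 2)

end Ex
end PiFair
namespace PiFair
namespace Ex

lemma live_nil {v μ} (h : Live v μ (.nil : LProc)) : False := by cases h

lemma live_LB1' {k v μ} (h : Live v μ (LB1' k)) : False := by
  unfold LB1' IAL at h
  aesop (add safe cases Live) (add simp [Act.n, Act.fnA, Act.bn])

lemma live_LB0 {k v μ} (h : Live v μ (LB0 k)) : μ = .tau ∧ v.2 = k + 1 := by
  unfold LB0 IAL at h
  aesop (add safe cases Live) (add simp [Act.n, Act.fnA, Act.bn])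

lemma live_LB1 {k v μ} (h : Live v μ (LB1 k)) : μ = .out 2 3 ∧ v.2 = k + 2 := by
  unfold LB1 IAL at h
  aesop (add safe cases Live) (add simp [Act.n, Act.fnA, Act.bn])

lemma live_Rep {m v μ} (h : Live v μ (RepL m)) : (∃ z, μ = .inp 2 z) ∧ v.2 = m := by
  unfold RepL at h
  cases h with
  | rep _ _ _ _ h => cases h; exact ⟨⟨_, rfl⟩, rfl⟩

lemma live_rho {v μ} (h : Live v μ rhoL) : ∃ z, μ = .inp 0 z := by
  unfold rhoL at h
  cases h; exact ⟨_, rfl⟩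

lemma live_combL {Z : LProc} : ∀ ts : List LProc,
    (∀ t ∈ ts, ∀ v' μ', ¬ Live v' μ' t) →
    ∀ {v μ}, Live v μ (combL ts Z) → Live v μ Z := by
  intro ts
  induction ts with
  | nil => exact fun _ _ _ h => h
  | cons u ts ih =>
      intro hdead v μ h
      have hu := hdead u (by simp)
      have hts : ∀ t ∈ ts, ∀ v' μ', ¬ Live v' μ' t := fun t ht => hdead t (by simp [ht])
      cases h with
      | parL _ _ _ _ h _ => exact absurd h (hu _ _)
      | parR _ _ _ _ h _ => exact ih hts h
      | comL₁ _ _ _ _ _ _ h1 h2 => exact absurd h1 (hu _ _)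
      | comL₂ _ _ _ _ _ _ h1 h2 => exact absurd h1 (hu _ _)
      | comR₁ _ _ _ _ _ _ h1 h2 => exact absurd h1 (hu _ _)
      | comR₂ _ _ _ _ _ _ h1 h2 => exact absurd h1 (hu _ _)
      | closeL₁ _ _ _ _ _ _ h1 h2 h3 => exact absurd h1 (hu _ _)
      | closeL₂ _ _ _ _ _ _ h1 h2 h3 => exact absurd h1 (hu _ _)
      | closeR₁ _ _ _ _ _ _ h1 h2 h3 => exact absurd h1 (hu _ _)
      | closeR₂ _ _ _ _ _ _ h1 h2 h3 => exact absurd h1 (hu _ _)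

lemma dead_deads {k} : ∀ t ∈ (LProc.nil :: deads k), ∀ v' μ', ¬ Live v' μ' t := by
  intro t ht v' μ'
  rcases List.mem_cons.1 ht with rfl | ht
  · exact live_nil
  · obtain ⟨j, _, rfl⟩ := List.mem_map.1 ht
    exact live_LB1'

def GoodX (X : LProc) (k : ℕ) : Prop :=
  ∀ v' μ', Live v' μ' X → k + 1 ≤ v'.2 ∧ (μ' = .out 2 3 ∨ μ' = .tau)

lemma live_EP_aux {X k} (hX : GoodX X k) {v μ} (h : Live v μ (EPt X k)) :
    k + 1 ≤ v.2 ∧ ((∃ z, μ = .inp 2 z) ∨ μ = .out 2 3 ∨ μ = .tau) := by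
  have h' := live_combL _ dead_deads h
  cases h' with
  | parL _ _ _ _ h _ =>
      obtain ⟨h1, h2⟩ := hX _ _ h
      exact ⟨h1, Or.inr h2⟩
  | parR _ _ _ _ h _ =>
      obtain ⟨⟨z, rfl⟩, h2⟩ := live_Rep h
      exact ⟨by omega, Or.inl ⟨z, rfl⟩⟩
  | comL₁ _ _ _ _ _ _ h1 h2 => rcases (hX _ _ h1).2 with h | h <;> simp at h
  | comL₂ _ _ _ _ _ _ h1 h2 => rcases (hX _ _ h1).2 with h | h <;> simp at h
  | comR₁ _ _ _ _ _ _ h1 h2 => exact ⟨(hX _ _ h1).1, Or.inr (Or.inr rfl)⟩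
  | comR₂ _ _ _ _ _ _ h1 h2 =>
      obtain ⟨_, h4⟩ := live_Rep h2
      exact ⟨by omega, Or.inr (Or.inr rfl)⟩
  | closeL₁ _ _ _ _ _ _ h1 h2 h3 => rcases (hX _ _ h1).2 with h | h <;> simp at h
  | closeL₂ _ _ _ _ _ _ h1 h2 h3 => rcases (hX _ _ h1).2 with h | h <;> simp at h
  | closeR₁ _ _ _ _ _ _ h1 h2 h3 => rcases (hX _ _ h1).2 with h | h <;> simp at h
  | closeR₂ _ _ _ _ _ _ h1 h2 h3 => rcases (hX _ _ h1).2 with h | h <;> simp at h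

lemma live_state {X k v} (hX : GoodX X k) (h : Live v .tau (.par (EPt X k) rhoL)) :
    k + 1 ≤ v.2 := by
  cases h with
  | parL _ _ _ _ h _ => exact (live_EP_aux hX h).1
  | parR _ _ _ _ h _ => obtain ⟨z, hz⟩ := live_rho h; simp at hz
  | comL₁ _ _ _ _ _ _ h1 h2 => obtain ⟨z, hz⟩ := live_rho h2; simp at hz
  | comL₂ _ _ _ _ _ _ h1 h2 => obtain ⟨z, hz⟩ := live_rho h2; simp at hz
  | comR₁ _ _ _ _ _ _ h1 h2 =>
      obtain ⟨z, hz⟩ := live_rho h2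
      obtain ⟨rfl, rfl⟩ : _ ∧ _ := by simpa using hz
      rcases (live_EP_aux hX h1).2 with ⟨z', h⟩ | h | h <;> simp at h
  | comR₂ _ _ _ _ _ _ h1 h2 =>
      obtain ⟨z, hz⟩ := live_rho h2
      obtain ⟨rfl, rfl⟩ : _ ∧ _ := by simpa using hz
      rcases (live_EP_aux hX h1).2 with ⟨z', h⟩ | h | h <;> simp at h
  | closeL₁ _ _ _ _ _ _ h1 h2 h3 => obtain ⟨z, hz⟩ := live_rho h2; simp at hz
  | closeL₂ _ _ _ _ _ _ h1 h2 h3 => obtain ⟨z, hz⟩ := live_rho h2; simp at hz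
  | closeR₁ _ _ _ _ _ _ h1 h2 h3 =>
      rcases (live_EP_aux hX h1).2 with ⟨z', h⟩ | h | h <;> simp at h
  | closeR₂ _ _ _ _ _ _ h1 h2 h3 =>
      rcases (live_EP_aux hX h1).2 with ⟨z', h⟩ | h | h <;> simp at h

lemma goodX_LB0 (k : ℕ) : GoodX (LB0 k) k := by
  intro v' μ' h
  obtain ⟨rfl, h2⟩ := live_LB0 h
  exact ⟨by omega, Or.inr rfl⟩

lemma goodX_LB1 (k : ℕ) : GoodX (LB1 k) k := by
  intro v' μ' h
  obtain ⟨rfl, h2⟩ := live_LB1 h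
  exact ⟨by omega, Or.inl rfl⟩

lemma strong_fair_aux {v : Label} {j : ℕ} (hj : 2 * v.2 ≤ j) : v ∉ Ll (seqF (j + 1)) := by
  intro hv
  have hv' : Live v .tau (seqF (j + 1)) := hv
  have hk : v.2 ≤ j / 2 := by omega
  by_cases h : j % 2 = 0
  · simp only [seqF, h, if_pos] at hv'
    have := live_state (goodX_LB0 (j / 2)) hv'
    omega
  · simp only [seqF, h, if_neg, if_false] at hv'
    have := live_state (goodX_LB1 (j / 2)) hv'
    omega

end Ex
end PiFair
namespace PiFair
namespace Ex

lemma step_noOmega {P μ P'} (h : Step P μ P') : P.noOmega → μ ≠ .omega := by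
  induction h <;> intro hP <;> try simp_all [Proc.noOmega]

lemma lstep_noOmega {E μ E'} (h : LStep E μ E') : E.noOmega → μ ≠ .omega := by
  induction h with
  | rep _ _ _ _ h => exact fun hE => step_noOmega h hE
  | _ => intro hE <;> simp_all [LProc.noOmega]

lemma noOmega_combL : ∀ ts : List LProc, (∀ t ∈ ts, LProc.noOmega t) →
    ∀ {Z : LProc}, Z.noOmega → (combL ts Z).noOmega := by
  intro ts
  induction ts with
  | nil => exact fun _ _ h => h
  | cons u ts ih =>
      intro h Z hZ
      exact ⟨h u (by simp), ih (fun t ht => h t (by simp [ht])) hZ⟩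

lemma noOmega_EPt {X k} (hX : X.noOmega) : (EPt X k).noOmega := by
  refine noOmega_combL _ ?_ ⟨hX, by simp [RepL, R, Bd, LProc.noOmega, Proc.noOmega]⟩
  intro t ht
  rcases List.mem_cons.1 ht with rfl | ht
  · simp [LProc.noOmega]
  · obtain ⟨j, _, rfl⟩ := List.mem_map.1 ht
    simp [LB1', IAL, LProc.noOmega]

lemma no_omega_par {E' T} (hE : E'.noOmega) (h : LStep (.par E' rhoL) .omega T) : False := by
  cases h with
  | parL _ _ _ _ h _ => exact lstep_noOmega h hE rfl
  | parR _ _ _ _ h _ => cases h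

lemma no_success (i : ℕ) (T : LProc) : ¬ LStep (seqF i) .omega T := by
  intro h
  cases i with
  | zero =>
      exact no_omega_par (by simp [EL, C0, RepL, R, Bd, LProc.noOmega, Proc.noOmega]) h
  | succ j =>
      refine no_omega_par ?_ h
      by_cases hj : j % 2 = 0 <;>
        simp only [seqF, hj, if_pos, if_neg, if_false] <;>
        exact noOmega_EPt (by simp [LB0, LB1, IAL, LProc.noOmega])

def compF : MaxComp LTauStep (.par EL rhoL) := ⟨seqF, rfl, fun i => Or.inl (succ_all i)⟩

lemma sf_compF : StrongFair compF := by
  intro v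
  refine ⟨2 * v.2 + 1, fun j hj => ?_⟩
  obtain ⟨m, rfl⟩ : ∃ m, j = m + 1 := ⟨j - 1, by omega⟩
  exact strong_fair_aux (by omega)

theorem not_sf : ¬ SfMust EL rhoL := by
  intro h
  obtain ⟨i, T, hT⟩ := h compF sf_compF
  exact no_success i T hT

end Ex
end PiFair

open PiFair.Ex

open PiFair in
/-- fair-testing does not imply sfmust; witnessed by
    E = c̄ | !c.((νb)(b̄ | b.c̄ | b.ā)) and ρ = a.ω
    (names a := 0, b := 1, c := 2, dummy object name 3). -/
theorem fair_not_imp_sfMust :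
    ∃ E ρ : LProc, Wf E ∧ E.noOmega ∧ Wf ρ ∧ Wf (.par E ρ) ∧
      E.unl = Proc.par (.output 2 3 .nil)
        (.rep (.input 2 3 (.res 1 (.par (.output 1 3 .nil)
          (.par (.input 1 3 (.output 2 3 .nil))
                (.input 1 3 (.output 0 3 .nil))))))) ∧
      ρ.unl = Proc.input 0 3 (.omegaPre .nil) ∧
      FairT E.unl ρ.unl ∧ ¬ SfMust E ρ := by
  refine ⟨EL, rhoL, ?_, ?_, ?_, ?_, rfl, rfl, ?_, not_sf⟩
  · refine Wf.par _ _ (Wf.prefOut lC 2 3 .nil) (Wf.rep _ _) ?_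
    intro l₀ h₀ l₁ h₁
    simp [LProc.top, C0, RepL, lC, sL] at h₀ h₁
    subst h₀; subst h₁
    constructor <;> decide
  · simp [EL, C0, RepL, R, Bd, LProc.noOmega, Proc.noOmega]
  · exact Wf.prefIn ([true], 0) 0 3 (.omegaPre .nil)
  · refine Wf.par _ _ ?_ (Wf.prefIn ([true], 0) 0 3 (.omegaPre .nil)) ?_
    · refine Wf.par _ _ (Wf.prefOut lC 2 3 .nil) (Wf.rep _ _) ?_
      intro l₀ h₀ l₁ h₁
      simp [LProc.top, C0, RepL, lC, sL] at h₀ h₁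
      subst h₀; subst h₁
      constructor <;> decide
    · intro l₀ h₀ l₁ h₁
      simp [LProc.top, EL, C0, RepL, rhoL, lC, sL] at h₀ h₁
      subst h₁
      rcases h₀ with rfl | rfl <;> constructor <;> decide
  · exact fairU
end
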